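/- arXiv:2206.09989 — 10 statements merged into one kernel-verified Lean document; each statement's English description precedes it below -/
import Mathlib

section
/- Let A : ℝ → Matrix (n×n, ℝ) be continuously differentiable and set d(ν) = det A(ν). Suppose ν₀ ∈ ℝ, u₀ ∈ ℝⁿ with u₀ ≠ 0 satisfies A(ν₀)u₀ = 0, and there exists u₁ ∈ ℝⁿ with A'(ν₀)u₀ + A(ν₀)u₁ = 0. Then d(ν₀) = 0 and d'(ν₀) = 0, i.e., ν₀ is a root of the determinant of multiplicity at least two. -/
/-!
Put `u(ν) = u₀ + (ν - ν₀) u₁`. The Jordan chain condition says exactly that `A(ν) u(ν)` vanishes to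
second order at `ν₀`, hence so does `adj A(ν) · A(ν) u(ν) = d(ν) u(ν)`. Differentiating at `ν₀`
gives `d'(ν₀) u₀ + d(ν₀) u₁ = 0`, and `d(ν₀) = 0` because `A(ν₀)` has the kernel vector `u₀ ≠ 0`.
-/

open Matrix

section

variable {𝕜 ι κ : Type*} [NontriviallyNormedField 𝕜] [Fintype ι]

theorem differentiableAt_det_of_entries [DecidableEq ι] {M : 𝕜 → Matrix ι ι 𝕜} {x : 𝕜}
    (hM : ∀ i j, DifferentiableAt 𝕜 (fun y => M y i j) x) :
    DifferentiableAt 𝕜 (fun y => (M y).det) x := by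
  simp only [det_apply']
  exact DifferentiableAt.fun_sum fun σ _ =>
    (DifferentiableAt.fun_finsetProd fun i _ => hM (σ i) i).const_mul _

theorem differentiableAt_adjugate_of_entries [DecidableEq ι] {M : 𝕜 → Matrix ι ι 𝕜} {x : 𝕜}
    (hM : ∀ i j, DifferentiableAt 𝕜 (fun y => M y i j) x) (i j : ι) :
    DifferentiableAt 𝕜 (fun y => (M y).adjugate i j) x := by
  simp only [adjugate_apply]
  refine differentiableAt_det_of_entries fun a b => ?_
  rcases eq_or_ne a j with rfl | hne
  · simpa only [updateRow_self] using differentiableAt_const _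
  · simpa only [updateRow_ne hne] using hM a b

theorem hasDerivAt_mulVec_of_entries {M : 𝕜 → Matrix κ ι 𝕜} {M' : Matrix κ ι 𝕜}
    {v : 𝕜 → ι → 𝕜} {v' : ι → 𝕜} {x : 𝕜}
    (hM : ∀ i j, HasDerivAt (fun y => M y i j) (M' i j) x) (hv : HasDerivAt v v' x) :
    HasDerivAt (fun y => M y *ᵥ v y) (M' *ᵥ v x + M x *ᵥ v') x := by
  rw [hasDerivAt_pi] at hv ⊢
  intro i
  simpa only [mulVec, dotProduct, Pi.add_apply, Finset.sum_add_distrib] using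
    HasDerivAt.fun_sum fun j _ => (hM i j).fun_mul (hv j)

theorem deriv_det_eq_zero_of_jordanChain [DecidableEq ι] {A : 𝕜 → Matrix ι ι 𝕜}
    {A' : Matrix ι ι 𝕜} {x : 𝕜} {u₀ u₁ : ι → 𝕜}
    (hA : ∀ i j, HasDerivAt (fun y => A y i j) (A' i j) x) (hu₀ : u₀ ≠ 0)
    (h₀ : A x *ᵥ u₀ = 0) (h₁ : A' *ᵥ u₀ + A x *ᵥ u₁ = 0) :
    deriv (fun y => (A y).det) x = 0 := by
  set u : 𝕜 → ι → 𝕜 := fun y => u₀ + (y - x) • u₁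
  have hu : HasDerivAt u u₁ x := by
    simpa only [one_smul] using (((hasDerivAt_id' x).sub_const x).smul_const u₁).const_add u₀
  have hAu : HasDerivAt (fun y => A y *ᵥ u y) 0 x := by
    simpa [u, h₁] using hasDerivAt_mulVec_of_entries hA hu
  have hAd : ∀ i j, DifferentiableAt 𝕜 (fun y => A y i j) x := fun i j => (hA i j).differentiableAt
  have hadj := hasDerivAt_mulVec_of_entries
    (M' := of fun i j => deriv (fun y => (A y).adjugate i j) x)
    (fun i j => (differentiableAt_adjugate_of_entries hAd i j).hasDerivAt) hAu
  have hcramer : (fun y => (A y).adjugate *ᵥ (A y *ᵥ u y)) = fun y => (A y).det • u y := by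
    funext y
    rw [mulVec_mulVec, adjugate_mul, smul_mulVec, one_mulVec]
  rw [hcramer] at hadj
  have hdet : (A x).det = 0 := exists_mulVec_eq_zero_iff.mp ⟨u₀, hu₀, h₀⟩
  have key := ((differentiableAt_det_of_entries hAd).hasDerivAt.smul hu).unique hadj
  simp only [u, hdet, sub_self, zero_smul, add_zero, zero_add, h₀, mulVec_zero] at key
  exact (smul_eq_zero.mp key).resolve_right hu₀

end

/-- If `A(ν₀)u₀ = 0` with `u₀ ≠ 0` and there is a Jordan chain vector `u₁` with
`A'(ν₀)u₀ + A(ν₀)u₁ = 0`, then the determinant `d(ν) = det A(ν)` has a root of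
multiplicity at least two at `ν₀`: `d(ν₀) = 0` and `d'(ν₀) = 0`. -/
theorem stmt1 (n : ℕ) (A : ℝ → Matrix (Fin n) (Fin n) ℝ)
    (hA : ∀ i j : Fin n, ContDiff ℝ 1 (fun ν : ℝ => A ν i j))
    (d : ℝ → ℝ) (hd : ∀ ν : ℝ, d ν = (A ν).det)
    (ν₀ : ℝ) (u₀ : Fin n → ℝ) (hu₀ : u₀ ≠ 0)
    (h1 : (A ν₀) *ᵥ u₀ = 0)
    (h2 : ∃ u₁ : Fin n → ℝ,
      (Matrix.of fun i j : Fin n => deriv (fun ν : ℝ => A ν i j) ν₀) *ᵥ u₀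
        + (A ν₀) *ᵥ u₁ = 0) :
    d ν₀ = 0 ∧ deriv d ν₀ = 0 := by
  obtain ⟨u₁, hu₁⟩ := h2
  obtain rfl : d = fun ν => (A ν).det := funext hd
  have hA' : ∀ i j, HasDerivAt (fun ν => A ν i j) (deriv (fun ν => A ν i j) ν₀) ν₀ :=
    fun i j => ((hA i j).differentiable one_ne_zero).differentiableAt.hasDerivAt
  exact ⟨exists_mulVec_eq_zero_iff.mp ⟨u₀, hu₀, h1⟩,
    deriv_det_eq_zero_of_jordanChain (A' := Matrix.of _) hA' hu₀ h1 hu₁⟩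
end

section
/- Let A : ℝ → Matrix (n×n, ℝ) be continuously differentiable and set d(ν) = det A(ν). Suppose ν₀ ∈ ℝ is such that d(ν₀) = 0, d'(ν₀) = 0, and the kernel of A(ν₀) is one-dimensional. Then for every u₀ spanning ker A(ν₀) there exists u₁ ∈ ℝⁿ with A'(ν₀)u₀ + A(ν₀)u₁ = 0; equivalently, A'(ν₀)u₀ lies in the range (column space) of A(ν₀). -/
/-!
Write `B = A(ν₀)`. Since `ker B` is a line spanned by `u₀`, the adjugate has rank one,
`adj B = u₀ αᵀ` with `αᵀ B = 0`, and `α ≠ 0` because `B` has rank `n - 1`. Jacobi's formula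
`d' = tr (adj A · A')` then reads `0 = d'(ν₀) = αᵀ A'(ν₀) u₀`, and the range of `B`, a hyperplane
annihilated by `α`, is exactly `α^⊥`; so `A'(ν₀) u₀` lies in it.
-/

open Matrix

namespace Matrix

variable {ι : Type*} [Fintype ι] [DecidableEq ι]

theorem sum_det_updateCol_eq_trace_adjugate_mul {R : Type*} [CommRing R] (B D : Matrix ι ι R) :
    ∑ i, (B.updateCol i fun k => D k i).det = trace (B.adjugate * D) := by
  refine Finset.sum_congr rfl fun i _ => ?_
  rw [← cramer_apply, cramer_eq_adjugate_mulVec]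
  rfl

section Field

variable {K : Type*} [Field K]

theorem isUnit_det_add_vecMulVec {B : Matrix ι ι K} {u c v : ι → K}
    (hker : LinearMap.ker B.mulVecLin ≤ K ∙ u) (hc : c ∉ LinearMap.range B.mulVecLin)
    (hv : v ⬝ᵥ u ≠ 0) : IsUnit (B + vecMulVec c v).det := by
  rw [isUnit_iff_ne_zero, Ne, ← exists_mulVec_eq_zero_iff]
  rintro ⟨x, hx0, hx⟩
  rw [add_mulVec, vecMulVec_mulVec, op_smul_eq_smul] at hx
  have hvx : v ⬝ᵥ x = 0 := by
    by_contra hvx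
    refine hc ⟨-(v ⬝ᵥ x)⁻¹ • x, ?_⟩
    rw [mulVecLin_apply, mulVec_smul, eq_neg_of_add_eq_zero_left hx, smul_neg, neg_smul, neg_neg,
      inv_smul_smul₀ hvx]
  rw [hvx, zero_smul, add_zero] at hx
  obtain ⟨t, rfl⟩ := Submodule.mem_span_singleton.mp (hker hx)
  rw [dotProduct_smul, smul_eq_mul, mul_eq_zero] at hvx
  exact hx0 (by simp [hvx.resolve_right hv])

theorem exists_adjugate_eq_vecMulVec {B : Matrix ι ι K} {u : ι → K}
    (hker : LinearMap.ker B.mulVecLin ≤ K ∙ u) (hu : u ≠ 0) (hB : B.det = 0) :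
    ∃ α : ι → K, B.adjugate = vecMulVec u α ∧ α ᵥ* B = 0 := by
  have hcol (i : ι) : ∃ a : K, a • u = B.adjugate.col i := by
    refine Submodule.mem_span_singleton.mp (hker ?_)
    rw [LinearMap.mem_ker, mulVecLin_apply, ← mulVec_single_one, mulVec_mulVec, mul_adjugate, hB,
      zero_smul, zero_mulVec]
  choose α hα using hcol
  have hadj : B.adjugate = vecMulVec u α := by
    ext j i
    rw [vecMulVec_apply, mul_comm, ← smul_eq_mul, ← Pi.smul_apply, hα]
    rfl
  refine ⟨α, hadj, ?_⟩
  have : vecMulVec u (α ᵥ* B) = 0 := by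
    rw [← vecMulVec_mul, ← hadj, adjugate_mul, hB, zero_smul]
  exact (vecMulVec_eq_zero.mp this).resolve_left hu

theorem mem_range_mulVecLin_of_dotProduct_eq_zero {B : Matrix ι ι K} {α y : ι → K}
    (hker : Module.finrank K (LinearMap.ker B.mulVecLin) = 1) (hα : α ≠ 0) (hαB : α ᵥ* B = 0)
    (hy : α ⬝ᵥ y = 0) : y ∈ LinearMap.range B.mulVecLin := by
  set f := dotProductEquiv K ι α
  have hf : f ≠ 0 := (LinearEquiv.map_ne_zero_iff _).mpr hα
  have hle : LinearMap.range B.mulVecLin ≤ LinearMap.ker f := by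
    rintro _ ⟨x, rfl⟩
    simp [f, dotProduct_mulVec, hαB]
  have hrank := LinearMap.finrank_range_add_finrank_ker B.mulVecLin
  have hrank' := Module.Dual.finrank_ker_add_one_of_ne_zero hf
  have heq := Submodule.eq_of_le_of_finrank_eq hle (by omega)
  exact heq ▸ hy

end Field

section Calculus

variable {𝕜 : Type*} [NontriviallyNormedField 𝕜]

theorem hasDerivAt_det {M : 𝕜 → Matrix ι ι 𝕜} {M' : Matrix ι ι 𝕜} {t : 𝕜}
    (h : ∀ i j, HasDerivAt (fun s => M s i j) (M' i j) t) :
    HasDerivAt (fun s => (M s).det) (trace ((M t).adjugate * M')) t := by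
  have hterm (σ : Equiv.Perm ι) : HasDerivAt (fun s => ∏ i, M s (σ i) i)
      (∑ i, (∏ j ∈ Finset.univ.erase i, M t (σ j) j) * M' (σ i) i) t := by
    simpa only [smul_eq_mul] using HasDerivAt.fun_finsetProd fun i _ => h (σ i) i
  have hdet := HasDerivAt.fun_sum fun σ (_ : σ ∈ Finset.univ) =>
    (hterm σ).const_mul ((Equiv.Perm.sign σ : ℤ) : 𝕜)
  simp only [← det_apply'] at hdet
  refine hdet.congr_deriv ?_
  rw [← sum_det_updateCol_eq_trace_adjugate_mul]
  simp_rw [det_apply', Finset.mul_sum]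
  rw [Finset.sum_comm]
  refine Finset.sum_congr rfl fun i _ => Finset.sum_congr rfl fun σ _ => ?_
  rw [← Finset.mul_prod_erase _ _ (Finset.mem_univ i), mul_comm (updateCol _ _ _ _ _)]
  congr 2
  · exact Finset.prod_congr rfl fun j hj => by
      rw [updateCol_apply, if_neg (Finset.ne_of_mem_erase hj)]
  · simp

/-- Invertibility of `B + c vᵀ` makes `s ↦ det (B + s • c vᵀ)` affine by Mathlib's matrix
determinant lemma; Jacobi's formula computes its slope at `0` as `vᵀ (adj B) c`. -/
theorem det_add_vecMulVec_of_isUnit {B : Matrix ι ι 𝕜} {c v : ι → 𝕜}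
    (h : IsUnit (B + vecMulVec c v).det) :
    (B + vecMulVec c v).det = B.det + v ⬝ᵥ B.adjugate *ᵥ c := by
  set M := B + vecMulVec c v
  set q := v ⬝ᵥ M⁻¹ *ᵥ c
  have hline (s : 𝕜) : (B + s • vecMulVec c v).det = M.det * (1 + (s - 1) * q) := by
    have : B + s • vecMulVec c v = M + replicateCol Unit ((s - 1) • c) * replicateRow Unit v := by
      rw [← vecMulVec_eq, smul_vecMulVec]
      module
    rw [this, det_add_replicateCol_mul_replicateRow h, det_unique (n := Unit), Matrix.mul_assoc,
      ← replicateCol_mulVec, replicateRow_mul_replicateCol, mulVec_smul, dotProduct_smul]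
    simp [q]
  have hderiv : HasDerivAt (fun s : 𝕜 => (B + s • vecMulVec c v).det) (M.det * q) 0 := by
    simp_rw [hline]
    simpa using (((hasDerivAt_id (0 : 𝕜)).sub_const 1).mul_const q).const_add 1 |>.const_mul M.det
  have hJacobi : HasDerivAt (fun s : 𝕜 => (B + s • vecMulVec c v).det)
      (v ⬝ᵥ B.adjugate *ᵥ c) 0 := by
    have := hasDerivAt_det (M := fun s : 𝕜 => B + s • vecMulVec c v) (M' := vecMulVec c v)
      (t := 0) fun i j => by
        simpa using ((hasDerivAt_id (0 : 𝕜)).mul_const (vecMulVec c v i j)).const_add (B i j)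
    simpa [mul_vecMulVec, dotProduct_comm] using this
  have h0 := hline 0
  rw [zero_smul, add_zero] at h0
  rw [h0, hJacobi.unique hderiv]
  ring

theorem adjugate_ne_zero_of_ker_le_span {B : Matrix ι ι 𝕜} {u : ι → 𝕜}
    (hker : LinearMap.ker B.mulVecLin ≤ 𝕜 ∙ u) (hu : u ≠ 0) (hB : B.det = 0) :
    B.adjugate ≠ 0 := by
  obtain ⟨c, hc⟩ : ∃ c, c ∉ LinearMap.range B.mulVecLin := by
    by_contra! hsurj
    rw [← exists_mulVec_eq_zero_iff] at hB
    obtain ⟨x, hx0, hx⟩ := hB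
    exact hx0 (LinearMap.injective_iff_surjective.mpr hsurj (a₂ := 0) (by simpa using hx))
  obtain ⟨j, hj⟩ := Function.ne_iff.mp hu
  -- `B + c eⱼᵀ` is invertible, and its determinant is `eⱼᵀ (adj B) c`.
  have hunit := isUnit_det_add_vecMulVec hker hc (v := Pi.single j 1) (by simpa using hj)
  intro hadj
  rw [det_add_vecMulVec_of_isUnit hunit, hB, hadj] at hunit
  simp at hunit

end Calculus

end Matrix

/-- If `d(ν) = det A(ν)` has a double root at `ν₀` (`d(ν₀) = d'(ν₀) = 0`) and the
kernel of `A(ν₀)` is one-dimensional, then every spanning vector `u₀` of the kernel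
admits a Jordan chain vector `u₁` with `A'(ν₀)u₀ + A(ν₀)u₁ = 0`; equivalently,
`A'(ν₀)u₀` lies in the range of `A(ν₀)`. -/
theorem stmt2 (n : ℕ) (A : ℝ → Matrix (Fin n) (Fin n) ℝ)
    (hA : ∀ i j : Fin n, ContDiff ℝ 1 (fun ν : ℝ => A ν i j))
    (d : ℝ → ℝ) (hd : ∀ ν : ℝ, d ν = (A ν).det)
    (ν₀ : ℝ)
    (h0 : d ν₀ = 0) (h1 : deriv d ν₀ = 0)
    (hker : Module.finrank ℝ (LinearMap.ker (A ν₀).mulVecLin) = 1) :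
    ∀ u₀ : Fin n → ℝ, LinearMap.ker (A ν₀).mulVecLin = Submodule.span ℝ {u₀} →
      (∃ u₁ : Fin n → ℝ,
        (Matrix.of fun i j : Fin n => deriv (fun ν : ℝ => A ν i j) ν₀) *ᵥ u₀
          + (A ν₀) *ᵥ u₁ = 0) ∧
      (Matrix.of fun i j : Fin n => deriv (fun ν : ℝ => A ν i j) ν₀) *ᵥ u₀ ∈
        LinearMap.range (A ν₀).mulVecLin := by
  intro u₀ hspan
  set B := A ν₀
  set B' := Matrix.of fun i j : Fin n => deriv (fun ν : ℝ => A ν i j) ν₀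
  have hu₀ : u₀ ≠ 0 := by
    rintro rfl
    rw [hspan, Submodule.span_zero_singleton, finrank_bot] at hker
    exact zero_ne_one hker
  have hdet : B.det = 0 := hd ν₀ ▸ h0
  obtain ⟨α, hadj, hαB⟩ := exists_adjugate_eq_vecMulVec hspan.le hu₀ hdet
  have hα : α ≠ 0 := by
    rintro rfl
    exact adjugate_ne_zero_of_ker_le_span hspan.le hu₀ hdet (by simpa using hadj)
  have hJacobi : HasDerivAt d (trace (B.adjugate * B')) ν₀ := by
    rw [funext hd]
    exact hasDerivAt_det fun i j => ((hA i j).differentiable one_ne_zero ν₀).hasDerivAt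
  have hαB'u₀ : α ⬝ᵥ B' *ᵥ u₀ = 0 := by
    rw [← h1, hJacobi.deriv, hadj, vecMulVec_mul, trace_vecMulVec, dotProduct_mulVec,
      dotProduct_comm]
  obtain ⟨u₁, hu₁⟩ := mem_range_mulVecLin_of_dotProduct_eq_zero hker hα hαB hαB'u₀
  refine ⟨⟨-u₁, ?_⟩, ⟨u₁, hu₁⟩⟩
  rw [mulVec_neg, ← hu₁, mulVecLin_apply, add_neg_cancel]
end

section
/- Let A : ℝ × ℝ → Matrix (n×n, ℝ) be twice continuously differentiable in (λ, ν), and set d(λ, ν) = det A(λ, ν). Fix ν₀ ∈ ℝ and write A⁰ = A(0, ν₀), A¹⁰ = ∂_λA(0, ν₀), A⁰¹ = ∂_νA(0, ν₀), A⁰² = (1/2)∂²_{νν}A(0, ν₀). Assume: ker A⁰ is one-dimensional and spanned by u₀ ≠ 0; e_ad ≠ 0 spans ker (A⁰)ᵀ; u₁ ∈ ℝⁿ satisfies A⁰¹u₀ + A⁰u₁ = 0; and κ ≠ 0 is the scalar with adj(A⁰) = κ·u₀e_adᵀ. Then ∂_λd(0, ν₀) = κ·⟨A¹⁰u₀, e_ad⟩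 and ∂²_{νν}d(0, ν₀) = 2κ·⟨A⁰²u₀ + A⁰¹u₁, e_ad⟩. -/
/-!
The first formula is Jacobi's formula `d' = tr (adj A · A')` evaluated with
`adj A⁰ = κ u₀ e_adᵀ`. For the second, put `w ν = u₀ + (ν - ν₀) u₁`: the Jordan chain says exactly
that `g ν = A(0, ν) w ν` vanishes to second order at `ν₀`, with `g''(ν₀) = 2 (A⁰²u₀ + A⁰¹u₁)`.
Differentiating `d(ν) w(ν) = adj A(0, ν) g(ν)` once shows that `d` vanishes to second order as well
(since `w ν₀ = u₀ ≠ 0`), and twice gives `d''(ν₀) u₀ = adj A⁰ g''(ν₀) = κ ⟨g''(ν₀), e_ad⟩ u₀`.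
-/

open Matrix Finset

section Determinant

variable {n : Type*} [Fintype n]

theorem Matrix.trace_smul_vecMulVec_mul {R : Type*} [CommRing R] (κ : R) (u e : n → R)
    (B : Matrix n n R) : ((κ • vecMulVec u e) * B).trace = κ * ((B *ᵥ u) ⬝ᵥ e) := by
  rw [smul_mul, trace_smul, vecMulVec_mul, trace_vecMulVec, dotProduct_comm (B *ᵥ u),
    dotProduct_mulVec, dotProduct_comm, smul_eq_mul]

theorem Matrix.smul_vecMulVec_mulVec {R : Type*} [CommRing R] (κ : R) (u e v : n → R) :
    (κ • vecMulVec u e) *ᵥ v = (κ * (v ⬝ᵥ e)) • u := by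
  rw [smul_mulVec, vecMulVec_mulVec, op_smul_eq_smul, smul_smul, dotProduct_comm]

variable [DecidableEq n]

theorem Matrix.trace_adjugate_mul {R : Type*} [CommRing R] (A B : Matrix n n R) :
    (A.adjugate * B).trace = ∑ i, (A.updateCol i fun k => B k i).det := by
  refine sum_congr rfl fun i _ => ?_
  rw [diag_apply, ← cramer_apply, cramer_eq_adjugate_mulVec]
  rfl

theorem Matrix.mul_det_eq_sum_adjugate_mul_mulVec {R : Type*} [CommRing R] (A : Matrix n n R)
    (v : n → R) (i : n) : v i * A.det = ∑ j, A.adjugate i j * (A *ᵥ v) j := by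
  have h : A.adjugate *ᵥ (A *ᵥ v) = A.det • v := by
    rw [mulVec_mulVec, adjugate_mul, smul_mulVec, one_mulVec]
  rw [mul_comm]
  exact (congrFun h i).symm

variable {𝕜 : Type*} [NontriviallyNormedField 𝕜]

theorem ContDiff.matrix_det {E : Type*} [NormedAddCommGroup E] [NormedSpace 𝕜 E]
    {k : WithTop ℕ∞} {f : E → Matrix n n 𝕜} (hf : ∀ i j, ContDiff 𝕜 k fun x => f x i j) :
    ContDiff 𝕜 k fun x => (f x).det := by
  simp only [det_apply']
  exact ContDiff.sum fun σ _ => contDiff_const.mul (contDiff_prod fun i _ => hf (σ i) i)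

theorem ContDiff.matrix_adjugate {E : Type*} [NormedAddCommGroup E] [NormedSpace 𝕜 E]
    {k : WithTop ℕ∞} {f : E → Matrix n n 𝕜} (hf : ∀ i j, ContDiff 𝕜 k fun x => f x i j)
    (i j : n) : ContDiff 𝕜 k fun x => (f x).adjugate i j := by
  simp only [adjugate_apply]
  refine ContDiff.matrix_det fun a b => ?_
  by_cases h : a = j
  · simp only [updateRow_apply, h, if_true]
    exact contDiff_const
  · simp only [updateRow_apply, h, if_false]
    exact hf a b

theorem HasDerivAt.matrix_det {f : 𝕜 → Matrix n n 𝕜} {f' : Matrix n n 𝕜} {x : 𝕜}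
    (hf : ∀ i j, HasDerivAt (fun t => f t i j) (f' i j) x) :
    HasDerivAt (fun t => (f t).det) ((f x).adjugate * f').trace x := by
  have hprod (σ : Equiv.Perm n) : HasDerivAt (fun t => ∏ i, f t (σ i) i)
      (∑ i, (∏ j ∈ univ.erase i, f x (σ j) j) • f' (σ i) i) x :=
    HasDerivAt.fun_finsetProd fun i _ => hf (σ i) i
  simp only [det_apply']
  refine (HasDerivAt.fun_sum fun σ _ =>
    (hprod σ).const_mul (Equiv.Perm.sign σ : 𝕜)).congr_deriv ?_
  simp only [trace_adjugate_mul, det_apply']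
  rw [sum_comm]
  refine sum_congr rfl fun σ _ => ?_
  rw [mul_sum]
  refine sum_congr rfl fun i _ => ?_
  rw [← mul_prod_erase univ _ (mem_univ i), updateCol_self,
    prod_congr rfl fun j hj => updateCol_ne (ne_of_mem_erase hj), smul_eq_mul]
  ring

end Determinant

section ProductRule

variable {𝕜 : Type*} [NontriviallyNormedField 𝕜] {𝔸 : Type*} [NormedRing 𝔸]
  [NormedAlgebra 𝕜 𝔸] {f g : 𝕜 → 𝔸} {x : 𝕜}

theorem deriv_fun_mul_of_eq_zero (hf : DifferentiableAt 𝕜 f x) (hg : DifferentiableAt 𝕜 g x)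
    (hg₀ : g x = 0) : deriv (fun y => f y * g y) x = f x * deriv g x := by
  rw [deriv_fun_mul hf hg, hg₀, mul_zero, zero_add]

theorem iteratedDeriv_two_fun_mul (hf : ContDiffAt 𝕜 2 f x) (hg : ContDiffAt 𝕜 2 g x) :
    iteratedDeriv 2 (fun y => f y * g y) x =
      iteratedDeriv 2 f x * g x + 2 * (deriv f x * deriv g x) + f x * iteratedDeriv 2 g x := by
  rw [iteratedDeriv_fun_mul hf hg]
  simp [sum_range_succ, iteratedDeriv_one, mul_assoc]
  abel

theorem iteratedDeriv_two_fun_mul_of_eq_zero (hf : ContDiffAt 𝕜 2 f x)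
    (hg : ContDiffAt 𝕜 2 g x) (hg₀ : g x = 0) (hg₁ : deriv g x = 0) :
    iteratedDeriv 2 (fun y => f y * g y) x = f x * iteratedDeriv 2 g x := by
  simp [iteratedDeriv_two_fun_mul hf hg, hg₀, hg₁]

end ProductRule

section JordanChain

variable {𝕜 : Type*} [NontriviallyNormedField 𝕜] {n : Type*} [Fintype n]
  {M : 𝕜 → Matrix n n 𝕜} {x : 𝕜}

theorem hasDerivAt_mulVec_affine_apply {M₁ : Matrix n n 𝕜}
    (hM : ∀ i j, HasDerivAt (fun t => M t i j) (M₁ i j) x) (u v : n → 𝕜) (i : n) :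
    HasDerivAt (fun t => (M t *ᵥ (u + (t - x) • v)) i) ((M₁ *ᵥ u + M x *ᵥ v) i) x := by
  have haff (k : n) : HasDerivAt (fun t => u k + (t - x) * v k) (v k) x := by
    simpa using ((hasDerivAt_id x).sub_const x |>.mul_const (v k)).const_add (u k)
  have h := HasDerivAt.fun_sum (u := univ) fun k _ => (hM i k).mul (haff k)
  simp only [sub_self, zero_mul, add_zero] at h
  simpa [mulVec, dotProduct, sum_add_distrib] using h

theorem iteratedDeriv_two_mulVec_affine_apply {M₁ M₂ : Matrix n n 𝕜}
    (hM : ∀ i j, ContDiff 𝕜 2 fun t => M t i j)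
    (hM₁ : ∀ i j, deriv (fun t => M t i j) x = M₁ i j)
    (hM₂ : ∀ i j, iteratedDeriv 2 (fun t => M t i j) x = M₂ i j) (u v : n → 𝕜) (i : n) :
    iteratedDeriv 2 (fun t => (M t *ᵥ (u + (t - x) • v)) i) x =
      (M₂ *ᵥ u) i + 2 * (M₁ *ᵥ v) i := by
  have haff (k : n) : ContDiff 𝕜 2 fun t => u k + (t - x) * v k := by fun_prop
  simp only [mulVec, dotProduct, Pi.add_apply, Pi.smul_apply, smul_eq_mul]
  rw [iteratedDeriv_fun_sum fun k _ => ((hM i k).mul (haff k)).contDiffAt]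
  have hterm (k : n) : iteratedDeriv 2 (fun t => M t i k * (u k + (t - x) * v k)) x =
      M₂ i k * u k + 2 * (M₁ i k * v k) := by
    rw [iteratedDeriv_two_fun_mul (hM i k).contDiffAt (haff k).contDiffAt, hM₁, hM₂]
    simp [iteratedDeriv_succ']
  simp only [hterm, sum_add_distrib, mul_sum]

variable [DecidableEq n] {w : 𝕜 → n → 𝕜}

theorem deriv_det_eq_zero_of_mulVec_vanishes (hM : ∀ i j, ContDiff 𝕜 2 fun t => M t i j)
    (hw : ∀ i, ContDiff 𝕜 2 fun t => w t i) (hwx : w x ≠ 0) (hg₀ : M x *ᵥ w x = 0)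
    (hg₁ : ∀ i, deriv (fun t => (M t *ᵥ w t) i) x = 0) :
    deriv (fun t => (M t).det) x = 0 := by
  obtain ⟨i, hi⟩ : ∃ i, w x i ≠ 0 := Function.ne_iff.mp hwx
  have hd₀ : (M x).det = 0 := exists_mulVec_eq_zero_iff.mp ⟨w x, hwx, hg₀⟩
  have hg (j : n) : Differentiable 𝕜 fun t => (M t *ᵥ w t) j :=
    (ContDiff.sum fun k _ => (hM j k).mul (hw k)).differentiable two_ne_zero
  have h := congrArg (fun f => deriv f x)
    (funext fun t => mul_det_eq_sum_adjugate_mul_mulVec (M t) (w t) i)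
  rw [deriv_fun_mul_of_eq_zero ((hw i).differentiable two_ne_zero x)
      ((ContDiff.matrix_det hM).differentiable two_ne_zero x) hd₀,
    deriv_fun_sum fun j _ =>
      ((ContDiff.matrix_adjugate hM i j).differentiable two_ne_zero x).fun_mul (hg j x),
    sum_eq_zero fun j _ => by
      rw [deriv_fun_mul_of_eq_zero ((ContDiff.matrix_adjugate hM i j).differentiable
        two_ne_zero x) (hg j x) (congrFun hg₀ j), hg₁, mul_zero]] at h
  exact (mul_eq_zero.mp h).resolve_left hi

theorem iteratedDeriv_two_det_smul_eq_adjugate_mulVec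
    (hM : ∀ i j, ContDiff 𝕜 2 fun t => M t i j) (hw : ∀ i, ContDiff 𝕜 2 fun t => w t i)
    (hwx : w x ≠ 0) (hg₀ : M x *ᵥ w x = 0)
    (hg₁ : ∀ i, deriv (fun t => (M t *ᵥ w t) i) x = 0) :
    iteratedDeriv 2 (fun t => (M t).det) x • w x =
      (M x).adjugate *ᵥ fun i => iteratedDeriv 2 (fun t => (M t *ᵥ w t) i) x := by
  have hg (j : n) : ContDiff 𝕜 2 fun t => (M t *ᵥ w t) j :=
    ContDiff.sum fun k _ => (hM j k).mul (hw k)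
  ext i
  have h := congrArg (fun f => iteratedDeriv 2 f x)
    (funext fun t => mul_det_eq_sum_adjugate_mul_mulVec (M t) (w t) i)
  rw [iteratedDeriv_two_fun_mul_of_eq_zero (hw i).contDiffAt
      (ContDiff.matrix_det hM).contDiffAt (exists_mulVec_eq_zero_iff.mp ⟨w x, hwx, hg₀⟩)
      (deriv_det_eq_zero_of_mulVec_vanishes hM hw hwx hg₀ hg₁),
    iteratedDeriv_fun_sum fun j _ => ((ContDiff.matrix_adjugate hM i j).mul (hg j)).contDiffAt,
    sum_congr rfl fun j _ => iteratedDeriv_two_fun_mul_of_eq_zero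
      (ContDiff.matrix_adjugate hM i j).contDiffAt (hg j).contDiffAt (congrFun hg₀ j) (hg₁ j)] at h
  simpa [mulVec, dotProduct, mul_comm] using h

theorem iteratedDeriv_two_det_smul_of_jordanChain {M₁ M₂ : Matrix n n 𝕜} {u₀ u₁ : n → 𝕜}
    (hM : ∀ i j, ContDiff 𝕜 2 fun t => M t i j)
    (hM₁ : ∀ i j, HasDerivAt (fun t => M t i j) (M₁ i j) x)
    (hM₂ : ∀ i j, iteratedDeriv 2 (fun t => M t i j) x = M₂ i j) (hu₀ : u₀ ≠ 0)
    (h₀ : M x *ᵥ u₀ = 0) (h₁ : M₁ *ᵥ u₀ + M x *ᵥ u₁ = 0) :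
    iteratedDeriv 2 (fun t => (M t).det) x • u₀ =
      (M x).adjugate *ᵥ (M₂ *ᵥ u₀ + (2 : 𝕜) • (M₁ *ᵥ u₁)) := by
  have hw (i : n) : ContDiff 𝕜 2 fun t => (u₀ + (t - x) • u₁) i := by
    simp only [Pi.add_apply, Pi.smul_apply, smul_eq_mul]
    fun_prop
  have hg₁ (i : n) : deriv (fun t => (M t *ᵥ (u₀ + (t - x) • u₁)) i) x = 0 := by
    rw [(hasDerivAt_mulVec_affine_apply hM₁ u₀ u₁ i).deriv, h₁, Pi.zero_apply]
  have key := iteratedDeriv_two_det_smul_eq_adjugate_mulVec hM hw (by simpa using hu₀)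
    (by simpa using h₀) hg₁
  simp only [sub_self, zero_smul, add_zero] at key
  rw [key]
  congr 1
  ext i
  rw [iteratedDeriv_two_mulVec_affine_apply hM (fun i j => (hM₁ i j).deriv) hM₂]
  simp

end JordanChain

theorem stmt4_general (n : ℕ) (A : ℝ → ℝ → Matrix (Fin n) (Fin n) ℝ)
    (hA : ∀ i j : Fin n, ContDiff ℝ 2 (fun p : ℝ × ℝ => A p.1 p.2 i j))
    (ν₀ : ℝ)
    (A0 A10 A01 A02 : Matrix (Fin n) (Fin n) ℝ)
    (hA0 : A0 = A 0 ν₀)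
    (hA10 : ∀ i j : Fin n, A10 i j = deriv (fun l : ℝ => A l ν₀ i j) 0)
    (hA01 : ∀ i j : Fin n, A01 i j = deriv (fun ν : ℝ => A 0 ν i j) ν₀)
    (hA02 : ∀ i j : Fin n, A02 i j = (1/2) * iteratedDeriv 2 (fun ν : ℝ => A 0 ν i j) ν₀)
    (u₀ : Fin n → ℝ) (hu₀ : u₀ ≠ 0)
    (hker : LinearMap.ker A0.mulVecLin = Submodule.span ℝ {u₀})
    (e_ad : Fin n → ℝ)
    (u₁ : Fin n → ℝ) (hu₁ : A01 *ᵥ u₀ + A0 *ᵥ u₁ = 0)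
    (κ : ℝ) (hadj : A0.adjugate = κ • Matrix.vecMulVec u₀ e_ad) :
    deriv (fun l : ℝ => (A l ν₀).det) 0 = κ * ((A10 *ᵥ u₀) ⬝ᵥ e_ad) ∧
    iteratedDeriv 2 (fun ν : ℝ => (A 0 ν).det) ν₀
      = 2 * κ * ((A02 *ᵥ u₀ + A01 *ᵥ u₁) ⬝ᵥ e_ad) := by
  have hRow (i j : Fin n) : ContDiff ℝ 2 fun l => A l ν₀ i j :=
    (hA i j).comp (contDiff_id.prodMk contDiff_const)
  have hCol (i j : Fin n) : ContDiff ℝ 2 fun ν => A 0 ν i j :=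
    (hA i j).comp (contDiff_const.prodMk contDiff_id)
  have hA0u₀ : A0 *ᵥ u₀ = 0 := by
    have h : u₀ ∈ LinearMap.ker A0.mulVecLin := hker ▸ Submodule.mem_span_singleton_self u₀
    simpa using h
  constructor
  · have h10 (i j : Fin n) : HasDerivAt (fun l => A l ν₀ i j) (A10 i j) 0 :=
      hA10 i j ▸ ((hRow i j).differentiable two_ne_zero 0).hasDerivAt
    rw [(HasDerivAt.matrix_det h10).deriv, ← hA0, hadj, trace_smul_vecMulVec_mul]
  · have h01 (i j : Fin n) : HasDerivAt (fun ν => A 0 ν i j) (A01 i j) ν₀ :=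
      hA01 i j ▸ ((hCol i j).differentiable two_ne_zero ν₀).hasDerivAt
    have h02 (i j : Fin n) : iteratedDeriv 2 (fun ν => A 0 ν i j) ν₀ = ((2 : ℝ) • A02) i j := by
      rw [Matrix.smul_apply, hA02, smul_eq_mul]
      ring
    have key := iteratedDeriv_two_det_smul_of_jordanChain hCol h01 h02 hu₀ (hA0 ▸ hA0u₀)
      (hA0 ▸ hu₁)
    rw [← hA0, hadj, smul_vecMulVec_mulVec] at key
    rw [smul_left_injective ℝ hu₀ key, smul_mulVec, ← smul_add, smul_dotProduct, smul_eq_mul]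
    ring

/-- At a point with one-dimensional kernel and a Jordan chain, the first
`λ`-derivative and second `ν`-derivative of `d(λ,ν) = det A(λ,ν)` are given by
`∂_λ d = κ⟨A¹⁰u₀, e_ad⟩` and `∂²_{νν} d = 2κ⟨A⁰²u₀ + A⁰¹u₁, e_ad⟩`. -/
theorem stmt4 (n : ℕ) (A : ℝ → ℝ → Matrix (Fin n) (Fin n) ℝ)
    (hA : ∀ i j : Fin n, ContDiff ℝ 2 (fun p : ℝ × ℝ => A p.1 p.2 i j))
    (ν₀ : ℝ)
    (A0 A10 A01 A02 : Matrix (Fin n) (Fin n) ℝ)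
    (hA0 : A0 = A 0 ν₀)
    (hA10 : ∀ i j : Fin n, A10 i j = deriv (fun l : ℝ => A l ν₀ i j) 0)
    (hA01 : ∀ i j : Fin n, A01 i j = deriv (fun ν : ℝ => A 0 ν i j) ν₀)
    (hA02 : ∀ i j : Fin n, A02 i j = (1/2) * iteratedDeriv 2 (fun ν : ℝ => A 0 ν i j) ν₀)
    (u₀ : Fin n → ℝ) (hu₀ : u₀ ≠ 0)
    (hker : LinearMap.ker A0.mulVecLin = Submodule.span ℝ {u₀})
    (e_ad : Fin n → ℝ) (he : e_ad ≠ 0)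
    (hcoker : LinearMap.ker A0.transpose.mulVecLin = Submodule.span ℝ {e_ad})
    (u₁ : Fin n → ℝ) (hu₁ : A01 *ᵥ u₀ + A0 *ᵥ u₁ = 0)
    (κ : ℝ) (hκ : κ ≠ 0) (hadj : A0.adjugate = κ • Matrix.vecMulVec u₀ e_ad) :
    deriv (fun l : ℝ => (A l ν₀).det) 0 = κ * ((A10 *ᵥ u₀) ⬝ᵥ e_ad) ∧
    iteratedDeriv 2 (fun ν : ℝ => (A 0 ν).det) ν₀
      = 2 * κ * ((A02 *ᵥ u₀ + A01 *ᵥ u₁) ⬝ᵥ e_ad) :=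
  stmt4_general n A hA ν₀ A0 A10 A01 A02 hA0 hA10 hA01 hA02 u₀ hu₀ hker e_ad u₁ hu₁ κ hadj
end

section
/- Let A : ℝ × ℝ → Matrix (n×n, ℝ) be twice continuously differentiable in (λ, ν), and set d(λ, ν) = det A(λ, ν). Fix ν₀ ∈ ℝ and write A⁰ = A(0, ν₀), A¹⁰ = ∂_λA(0, ν₀), A⁰¹ = ∂_νA(0, ν₀), A⁰² = (1/2)∂²_{νν}A(0, ν₀). Assume ker A⁰ is one-dimensional and spanned by u₀ ≠ 0, e_ad ≠ 0 spans ker (A⁰)ᵀ, and u₁ ∈ ℝⁿ satisfies A⁰¹u₀ + A⁰u₁ = 0. Then ∂_λd(0, ν₀)·∂²_{νν}d(0, ν₀) < 0 if and only if ⟨A¹⁰u₀, e_ad⟩·⟨A⁰²u₀ + A⁰¹u₁, e_ad⟩ < 0. -/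
/-!
Because `ker A⁰` is a line, `adj A⁰ = c • u₀ e_adᵀ` with `c ≠ 0`: the columns of `adj A⁰` lie in
`ker A⁰`, its rows in `ker A⁰ᵀ`, and the minor obtained by replacing a redundant row of `A⁰` with a
unit vector not orthogonal to `u₀` is invertible. Jacobi's formula `d' = tr (adj A · A')` then gives
`∂_λ d = c ⟨e_ad, A¹⁰u₀⟩` and `∂_ν d = c ⟨e_ad, A⁰¹u₀⟩ = -c ⟨A⁰ᵀe_ad, u₁⟩ = 0`. Differentiating
once more, `∂²_νν d = tr (P A⁰¹) + 2c ⟨e_ad, A⁰²u₀⟩` with `P = ∂_ν adj A`. Since `∂_ν d = 0`,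
differentiating `A · adj A = adj A · A = d • 1` gives `A⁰P = -A⁰¹ adj A⁰` and
`PA⁰ = -adj A⁰ A⁰¹`; these force `tr (P A⁰¹) = 2c ⟨e_ad, A⁰¹u₁⟩`. Hence
`∂_λ d · ∂²_νν d = 2c² ⟨A¹⁰u₀, e_ad⟩ ⟨A⁰²u₀ + A⁰¹u₁, e_ad⟩`.
-/

open Matrix

section LinearAlgebra

variable {K : Type*} [Field K] {n : Type*} [Fintype n] {A R : Matrix n n K} {u e x : n → K}

theorem mulVec_eq_zero_iff_of_ker_eq_span (hker : LinearMap.ker A.mulVecLin = K ∙ u) :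
    A *ᵥ x = 0 ↔ ∃ a : K, a • u = x := by
  rw [← Submodule.mem_span_singleton, ← hker, LinearMap.mem_ker, mulVecLin_apply]

theorem exists_eq_vecMulVec_of_mul_eq_zero (hker : LinearMap.ker A.mulVecLin = K ∙ u)
    (hR : A * R = 0) : ∃ z, R = vecMulVec u z := by
  have hcol : ∀ j, ∃ a : K, a • u = fun i => R i j := fun j =>
    (mulVec_eq_zero_iff_of_ker_eq_span hker).1 <| funext fun i => by
      simpa [mul_apply, mulVec, dotProduct] using congrFun₂ hR i j
  choose z hz using hcol
  exact ⟨z, ext fun i j => by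
    rw [vecMulVec_apply, ← congrFun (hz j) i, Pi.smul_apply, smul_eq_mul, mul_comm]⟩

theorem trace_vecMulVec_mul {α : Type*} [CommSemiring α] (u e : n → α) (M : Matrix n n α) :
    (vecMulVec u e * M).trace = e ⬝ᵥ M *ᵥ u := by
  rw [vecMulVec_mul, trace_vecMulVec, dotProduct_comm, dotProduct_mulVec]

theorem trace_eq_of_mulVec_eq_smul (hker : LinearMap.ker A.mulVecLin = K ∙ u) (hu : u ≠ 0)
    {μ : K} (hR : A * R = 0) (hRu : R *ᵥ u = μ • u) : R.trace = μ := by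
  obtain ⟨z, rfl⟩ := exists_eq_vecMulVec_of_mul_eq_zero hker hR
  rw [vecMulVec_mulVec, op_smul_eq_smul] at hRu
  rw [trace_vecMulVec, dotProduct_comm]
  exact smul_left_injective K hu hRu

variable {A' P : Matrix n n K} {u₁ : n → K} {c : K}

theorem dotProduct_mulVec_eq_zero_of_add_mulVec_eq_zero (he : e ᵥ* A = 0)
    (hchain : A' *ᵥ u + A *ᵥ u₁ = 0) : e ⬝ᵥ A' *ᵥ u = 0 := by
  rw [eq_neg_of_add_eq_zero_left hchain, dotProduct_neg, dotProduct_mulVec, he, zero_dotProduct,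
    neg_zero]

variable [DecidableEq n]

theorem det_updateRow_eq_vecMul_adjugate {α : Type*} [CommRing α] (M : Matrix n n α) (i : n)
    (v : n → α) : (M.updateRow i v).det = (v ᵥ* adjugate M) i := by
  rw [← cramer_transpose_apply, cramer_eq_adjugate_mulVec, ← adjugate_transpose, mulVec_transpose]

/-- Since `e i ≠ 0`, row `i` of `A` is a combination of the others, so replacing it by the `j`-th
unit vector (which detects the kernel direction `u`) gives an invertible matrix. -/
theorem adjugate_apply_ne_zero_of_ker_eq_span (hker : LinearMap.ker A.mulVecLin = K ∙ u)
    (hcoker : LinearMap.ker Aᵀ.mulVecLin = K ∙ e) {i j : n} (hi : e i ≠ 0) (hj : u j ≠ 0) :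
    adjugate A j i ≠ 0 := by
  rw [adjugate_apply]
  intro hdet
  obtain ⟨x, hx0, hx⟩ := exists_mulVec_eq_zero_iff.2 hdet
  have hrow : ∀ k, k ≠ i → (A *ᵥ x) k = 0 := fun k hk => by
    simpa [mulVec, updateRow_ne hk] using congrFun hx k
  have hxj : x j = 0 := by
    simpa [mulVec, updateRow_self, single_dotProduct] using congrFun hx i
  have hAx : A *ᵥ x = 0 := by
    have he : e ᵥ* A = 0 := by
      rw [← mulVec_transpose, mulVec_eq_zero_iff_of_ker_eq_span hcoker]
      exact ⟨1, one_smul K e⟩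
    have hsingle : A *ᵥ x = Pi.single i ((A *ᵥ x) i) := by
      ext k
      rcases eq_or_ne k i with rfl | hk
      · simp
      · simp [hrow k hk, hk]
    have hi' : e i * (A *ᵥ x) i = 0 := by
      rw [← dotProduct_single, ← hsingle, dotProduct_mulVec, he, zero_dotProduct]
    rw [hsingle, (mul_eq_zero.1 hi').resolve_left hi, Pi.single_zero]
  obtain ⟨a, rfl⟩ := (mulVec_eq_zero_iff_of_ker_eq_span hker).1 hAx
  have ha : a = 0 := by simpa [hj] using hxj
  exact hx0 (by rw [ha, zero_smul])

theorem exists_adjugate_eq_smul_vecMulVec (hker : LinearMap.ker A.mulVecLin = K ∙ u)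
    (hcoker : LinearMap.ker Aᵀ.mulVecLin = K ∙ e) (hu : u ≠ 0) (he : e ≠ 0) :
    ∃ c : K, c ≠ 0 ∧ adjugate A = c • vecMulVec u e := by
  have hdet : A.det = 0 := exists_mulVec_eq_zero_iff.1
    ⟨u, hu, (mulVec_eq_zero_iff_of_ker_eq_span hker).2 ⟨1, one_smul K u⟩⟩
  obtain ⟨z, hz⟩ := exists_eq_vecMulVec_of_mul_eq_zero hker
    (by rw [mul_adjugate, hdet, zero_smul])
  obtain ⟨w, hw⟩ := exists_eq_vecMulVec_of_mul_eq_zero (R := (adjugate A)ᵀ) hcoker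
    (by rw [← transpose_mul, adjugate_mul, hdet, zero_smul, transpose_zero])
  obtain ⟨j, hj⟩ : ∃ j, u j ≠ 0 := Function.ne_iff.1 hu
  obtain ⟨i, hi⟩ : ∃ i, e i ≠ 0 := Function.ne_iff.1 he
  have hzw : ∀ k l, u k * z l = w k * e l := fun k l => by
    rw [← vecMulVec_apply, ← hz, ← transpose_apply (adjugate A), hw, vecMulVec_apply, mul_comm]
  set c := w j / u j
  have hzc : z = c • e := funext fun l => by
    rw [Pi.smul_apply, smul_eq_mul, div_mul_eq_mul_div, eq_div_iff hj, mul_comm, hzw]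
  have hadj : adjugate A = c • vecMulVec u e := by rw [hz, hzc, vecMulVec_smul]
  refine ⟨c, fun hc => adjugate_apply_ne_zero_of_ker_eq_span hker hcoker hi hj ?_, hadj⟩
  simp [hadj, hc]

/-- `P` stands for the derivative of `adjugate` along a curve through `A` with velocity `A'` on
which `det` is critical; `hright` and `hleft` are the derivatives of `A * adjugate A = det A • 1`
and `adjugate A * A = det A • 1`. -/
theorem trace_mul_eq_of_adjugate_eq_smul_vecMulVec
    (hker : LinearMap.ker A.mulVecLin = K ∙ u) (hu : u ≠ 0) (he : e ᵥ* A = 0)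
    (hadj : adjugate A = c • vecMulVec u e) (hchain : A' *ᵥ u + A *ᵥ u₁ = 0)
    (hright : A' * adjugate A + A * P = 0) (hleft : P * A + adjugate A * A' = 0) :
    (P * A').trace = 2 * c * (e ⬝ᵥ A' *ᵥ u₁) := by
  have hAu₁ : A *ᵥ u₁ = -(A' *ᵥ u) := eq_neg_of_add_eq_zero_right hchain
  have heu := dotProduct_mulVec_eq_zero_of_add_mulVec_eq_zero he hchain
  -- `R` has its columns in `ker A = K ∙ u` and `u` as an eigenvector, which determines its trace.
  set R := P * A' - c • vecMulVec u₁ (e ᵥ* A')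
  have hAR : A * R = 0 := by
    have hAP : A * P = -(c • vecMulVec (A' *ᵥ u) e) := by
      rw [eq_neg_of_add_eq_zero_right hright, hadj, Matrix.mul_smul, mul_vecMulVec]
    rw [mul_sub, ← mul_assoc, hAP, Matrix.mul_smul, mul_vecMulVec, hAu₁, Matrix.neg_mul,
      Matrix.smul_mul, vecMulVec_mul, neg_vecMulVec, smul_neg, sub_neg_eq_add, neg_add_cancel]
  have hRu : R *ᵥ u = (c * (e ⬝ᵥ A' *ᵥ u₁)) • u := by
    have hPA : P * A = -(c • vecMulVec u (e ᵥ* A')) := by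
      rw [eq_neg_of_add_eq_zero_left hleft, hadj, Matrix.smul_mul, vecMulVec_mul]
    rw [sub_mulVec, ← mulVec_mulVec, eq_neg_of_add_eq_zero_left hchain, mulVec_neg,
      mulVec_mulVec, hPA, smul_mulVec, vecMulVec_mulVec, ← dotProduct_mulVec, heu, neg_mulVec,
      neg_neg, smul_mulVec, vecMulVec_mulVec, ← dotProduct_mulVec]
    simp [smul_smul]
  calc (P * A').trace = R.trace + c * (u₁ ⬝ᵥ e ᵥ* A') := by
        rw [trace_sub, trace_smul, trace_vecMulVec, smul_eq_mul, sub_add_cancel]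
    _ = 2 * c * (e ⬝ᵥ A' *ᵥ u₁) := by
        rw [trace_eq_of_mulVec_eq_smul hker hu hAR hRu, dotProduct_comm u₁, ← dotProduct_mulVec]
        ring

end LinearAlgebra

section Calculus

variable {𝕜 : Type*} [NontriviallyNormedField 𝕜] {l m n : Type*} {t : 𝕜}

/-- `Matrix` carries no global norm, so derivatives of matrix-valued curves are taken entrywise. -/
def HasEntrywiseDerivAt (B : 𝕜 → Matrix m n 𝕜) (B' : Matrix m n 𝕜) (t : 𝕜) : Prop :=
  ∀ i j, HasDerivAt (fun s => B s i j) (B' i j) t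

theorem HasDerivAt.hasEntrywiseDerivAt_smul_const {f : 𝕜 → 𝕜} {f' : 𝕜} (hf : HasDerivAt f f' t)
    (M : Matrix m n 𝕜) : HasEntrywiseDerivAt (fun s => f s • M) (f' • M) t :=
  fun i j => by simpa only [Matrix.smul_apply, smul_eq_mul] using hf.mul_const (M i j)

theorem hasEntrywiseDerivAt_of_differentiableAt {B : 𝕜 → Matrix m n 𝕜}
    (hB : ∀ i j, DifferentiableAt 𝕜 (fun s => B s i j) t) :
    HasEntrywiseDerivAt B (of fun i j => deriv (fun s => B s i j) t) t :=
  fun i j => (hB i j).hasDerivAt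

theorem hasEntrywiseDerivAt_deriv_of_contDiff_two {B : 𝕜 → Matrix m n 𝕜}
    (hB : ∀ i j, ContDiff 𝕜 2 fun s => B s i j) :
    HasEntrywiseDerivAt (fun s => of fun i j => deriv (fun r => B r i j) s)
      (of fun i j => iteratedDeriv 2 (fun s => B s i j) t) t := fun i j => by
  have hd := (hB i j).differentiable_iteratedDeriv 1 (by norm_num)
  rw [iteratedDeriv_one] at hd
  refine (hd t).hasDerivAt.congr_deriv ?_
  rw [of_apply, show (2 : ℕ) = 1 + 1 from rfl, iteratedDeriv_succ, iteratedDeriv_one]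

namespace HasEntrywiseDerivAt

variable {B : 𝕜 → Matrix m n 𝕜} {B' B'' : Matrix m n 𝕜}

theorem unique (h : HasEntrywiseDerivAt B B' t) (h' : HasEntrywiseDerivAt B B'' t) : B' = B'' :=
  ext fun i j => (h i j).unique (h' i j)

theorem mul [Fintype m] {B : 𝕜 → Matrix l m 𝕜} {C : 𝕜 → Matrix m n 𝕜} {B' : Matrix l m 𝕜}
    {C' : Matrix m n 𝕜} (hB : HasEntrywiseDerivAt B B' t) (hC : HasEntrywiseDerivAt C C' t) :
    HasEntrywiseDerivAt (fun s => B s * C s) (B' * C t + B t * C') t := by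
  intro i j
  simp only [Matrix.add_apply, mul_apply, ← Finset.sum_add_distrib]
  exact HasDerivAt.fun_sum fun k _ => (hB i k).fun_mul (hC k j)

theorem trace [Fintype n] {B : 𝕜 → Matrix n n 𝕜} {B' : Matrix n n 𝕜}
    (hB : HasEntrywiseDerivAt B B' t) : HasDerivAt (fun s => (B s).trace) B'.trace t :=
  HasDerivAt.fun_sum fun i _ => hB i i

theorem updateRow [DecidableEq m] (hB : HasEntrywiseDerivAt B B' t) (j : m) (v : n → 𝕜) :
    HasEntrywiseDerivAt (fun s => (B s).updateRow j v) (B'.updateRow j 0) t := by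
  intro i k
  rcases eq_or_ne i j with rfl | hij
  · simpa only [updateRow_self, Pi.zero_apply] using hasDerivAt_const t (v k)
  · simpa only [updateRow_ne hij] using hB i k

end HasEntrywiseDerivAt

variable [Fintype n] [DecidableEq n] {B : 𝕜 → Matrix n n 𝕜} {B' : Matrix n n 𝕜}

noncomputable def detContinuousMultilinearMap :
    ContinuousMultilinearMap 𝕜 (fun _ : n => n → 𝕜) 𝕜 where
  toMultilinearMap := (detRowAlternating : (n → 𝕜) [⋀^n]→ₗ[𝕜] 𝕜).toMultilinearMap
  cont := continuous_id.matrix_det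

theorem HasEntrywiseDerivAt.det (hB : HasEntrywiseDerivAt B B' t) :
    HasDerivAt (fun s => (B s).det) (adjugate (B t) * B').trace t := by
  have hrows : HasDerivAt (fun s => (B s : n → n → 𝕜)) B' t :=
    hasDerivAt_pi.2 fun i => hasDerivAt_pi.2 (hB i)
  refine ((detContinuousMultilinearMap (𝕜 := 𝕜) (n := n)).hasFDerivAt
    (B t : n → n → 𝕜)).comp_hasDerivAt t hrows |>.congr_deriv ?_
  erw [ContinuousMultilinearMap.linearDeriv_apply]
  change ∑ i, ((B t).updateRow i (B' i)).det = _
  simp only [det_updateRow_eq_vecMul_adjugate]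
  rw [trace_mul_comm]
  rfl

theorem HasEntrywiseDerivAt.det_of_adjugate_eq_smul_vecMulVec (hB : HasEntrywiseDerivAt B B' t)
    {u e : n → 𝕜} {c : 𝕜} (hadj : adjugate (B t) = c • vecMulVec u e) :
    HasDerivAt (fun s => (B s).det) (c * (e ⬝ᵥ B' *ᵥ u)) t := by
  simpa only [hadj, smul_mul, trace_smul, trace_vecMulVec_mul, smul_eq_mul] using hB.det

theorem HasEntrywiseDerivAt.exists_adjugate (hB : HasEntrywiseDerivAt B B' t) :
    ∃ P, HasEntrywiseDerivAt (fun s => adjugate (B s)) P t := by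
  refine ⟨of fun i j => deriv (fun s => adjugate (B s) i j) t, fun i j => ?_⟩
  simp only [adjugate_apply, of_apply]
  exact (hB.updateRow j _).det.differentiableAt.hasDerivAt

variable {P : Matrix n n 𝕜}

theorem HasEntrywiseDerivAt.mul_adjugate_eq_zero (hB : HasEntrywiseDerivAt B B' t)
    (hP : HasEntrywiseDerivAt (fun s => adjugate (B s)) P t)
    (hdet : HasDerivAt (fun s => (B s).det) 0 t) :
    B' * adjugate (B t) + B t * P = 0 := by
  refine (hB.mul hP).unique ?_
  simpa only [mul_adjugate, zero_smul] using hdet.hasEntrywiseDerivAt_smul_const 1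

theorem HasEntrywiseDerivAt.adjugate_mul_eq_zero (hB : HasEntrywiseDerivAt B B' t)
    (hP : HasEntrywiseDerivAt (fun s => adjugate (B s)) P t)
    (hdet : HasDerivAt (fun s => (B s).det) 0 t) :
    P * B t + adjugate (B t) * B' = 0 := by
  refine (hP.mul hB).unique ?_
  simpa only [adjugate_mul, zero_smul] using hdet.hasEntrywiseDerivAt_smul_const 1

theorem iteratedDeriv_two_det_eq {B B₁ : 𝕜 → Matrix n n 𝕜} {B₂ : Matrix n n 𝕜}
    {u e u₁ : n → 𝕜} {c : 𝕜} (hB : ∀ s, HasEntrywiseDerivAt B (B₁ s) s)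
    (hB₁ : HasEntrywiseDerivAt B₁ B₂ t) (hker : LinearMap.ker (B t).mulVecLin = 𝕜 ∙ u)
    (hu : u ≠ 0) (he : e ᵥ* B t = 0) (hadj : adjugate (B t) = c • vecMulVec u e)
    (hchain : B₁ t *ᵥ u + B t *ᵥ u₁ = 0) :
    iteratedDeriv 2 (fun s => (B s).det) t = c * (e ⬝ᵥ B₂ *ᵥ u) + 2 * c * (e ⬝ᵥ B₁ t *ᵥ u₁) := by
  obtain ⟨P, hP⟩ := (hB t).exists_adjugate
  have hdet : HasDerivAt (fun s => (B s).det) 0 t := by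
    simpa only [dotProduct_mulVec_eq_zero_of_add_mulVec_eq_zero he hchain, mul_zero] using
      (hB t).det_of_adjugate_eq_smul_vecMulVec hadj
  have hderiv : deriv (fun s => (B s).det) = fun s => (adjugate (B s) * B₁ s).trace :=
    funext fun s => (hB s).det.deriv
  rw [show (2 : ℕ) = 1 + 1 from rfl, iteratedDeriv_succ, iteratedDeriv_one, hderiv,
    (hP.mul hB₁).trace.deriv, trace_add,
    trace_mul_eq_of_adjugate_eq_smul_vecMulVec hker hu he hadj hchain
      ((hB t).mul_adjugate_eq_zero hP hdet) ((hB t).adjugate_mul_eq_zero hP hdet),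
    hadj, smul_mul, trace_smul, trace_vecMulVec_mul, smul_eq_mul]
  ring

end Calculus

/-- Equivalence of the determinant-based sign condition `∂_λd · ∂²_{νν}d < 0` for a
simple double root with the matrix-pencil (Jordan-chain) sign condition
`⟨A¹⁰u₀, e_ad⟩ · ⟨A⁰²u₀ + A⁰¹u₁, e_ad⟩ < 0`. -/
theorem stmt5 (n : ℕ) (A : ℝ → ℝ → Matrix (Fin n) (Fin n) ℝ)
    (hA : ∀ i j : Fin n, ContDiff ℝ 2 (fun p : ℝ × ℝ => A p.1 p.2 i j))
    (ν₀ : ℝ)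
    (A0 A10 A01 A02 : Matrix (Fin n) (Fin n) ℝ)
    (hA0 : A0 = A 0 ν₀)
    (hA10 : ∀ i j : Fin n, A10 i j = deriv (fun l : ℝ => A l ν₀ i j) 0)
    (hA01 : ∀ i j : Fin n, A01 i j = deriv (fun ν : ℝ => A 0 ν i j) ν₀)
    (hA02 : ∀ i j : Fin n, A02 i j = (1/2) * iteratedDeriv 2 (fun ν : ℝ => A 0 ν i j) ν₀)
    (u₀ : Fin n → ℝ) (hu₀ : u₀ ≠ 0)
    (hker : LinearMap.ker A0.mulVecLin = Submodule.span ℝ {u₀})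
    (e_ad : Fin n → ℝ) (he : e_ad ≠ 0)
    (hcoker : LinearMap.ker A0.transpose.mulVecLin = Submodule.span ℝ {e_ad})
    (u₁ : Fin n → ℝ) (hu₁ : A01 *ᵥ u₀ + A0 *ᵥ u₁ = 0) :
    (deriv (fun l : ℝ => (A l ν₀).det) 0
        * iteratedDeriv 2 (fun ν : ℝ => (A 0 ν).det) ν₀ < 0) ↔
    ((A10 *ᵥ u₀) ⬝ᵥ e_ad) * ((A02 *ᵥ u₀ + A01 *ᵥ u₁) ⬝ᵥ e_ad) < 0 := by
  subst hA0
  obtain rfl : A10 = of fun i j => deriv (fun l => A l ν₀ i j) 0 := ext hA10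
  obtain rfl : A01 = of fun i j => deriv (fun ν => A 0 ν i j) ν₀ := ext hA01
  obtain rfl : A02 = (1 / 2 : ℝ) • of fun i j => iteratedDeriv 2 (fun ν => A 0 ν i j) ν₀ :=
    ext hA02
  have hlam : ∀ i j, ContDiff ℝ 2 fun l => A l ν₀ i j := fun i j =>
    (hA i j).comp (contDiff_id.prodMk contDiff_const)
  have hν : ∀ i j, ContDiff ℝ 2 fun ν => A 0 ν i j := fun i j =>
    (hA i j).comp (contDiff_const.prodMk contDiff_id)
  have heA : e_ad ᵥ* A 0 ν₀ = 0 := by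
    rw [← mulVec_transpose, mulVec_eq_zero_iff_of_ker_eq_span hcoker]
    exact ⟨1, one_smul ℝ e_ad⟩
  obtain ⟨c, hc, hadj⟩ := exists_adjugate_eq_smul_vecMulVec hker hcoker hu₀ he
  have hdlam := (hasEntrywiseDerivAt_of_differentiableAt (B := fun l => A l ν₀) fun i j =>
    (hlam i j).differentiable two_ne_zero 0).det_of_adjugate_eq_smul_vecMulVec hadj
  have hdνν := iteratedDeriv_two_det_eq (fun ν => hasEntrywiseDerivAt_of_differentiableAt
    fun i j => (hν i j).differentiable two_ne_zero ν) (hasEntrywiseDerivAt_deriv_of_contDiff_two hν)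
    hker hu₀ heA hadj hu₁
  rw [hdlam.deriv, hdνν]
  refine Iff.trans ?_ (smul_neg_iff_of_pos_left (by positivity : (0 : ℝ) < 2 * c ^ 2))
  apply iff_of_eq
  congr 1
  simp only [dotProduct_comm _ e_ad, smul_mulVec, dotProduct_add, dotProduct_smul, smul_eq_mul]
  ring
end

section
/- Let D : ℝ³ → ℝ be smooth (C^∞) and define d(λ, ν, c, μ) = D(λ − cν, ν, μ). Suppose ν₀ ≠ 0 and, at the point (λ, ν, c, μ) = (0, ν₀, c₀, 0), one has d = 0, ∂_νd = 0, ∂²_{νν}d ≠ 0, and ∂_λd ≠ 0. Then there exist ε > 0 and smooth functions c_lin, ν_lin : (−ε, ε) → ℝ with c_lin(0) = c₀ and ν_lin(0) = ν₀ such that for every μ ∈ (−ε, ε): d(0, ν_lin(μ), c_lin(μ), μ) = 0, ∂_νd(0, ν_lin(μ), c_lin(μ), μ) = 0, ∂²_{νν}d(0, ν_lin(μ), c_lin(μ), μ) ≠ 0, and ∂_λd(0, ν_lin(μ), c_lin(μ), μ) ≠ 0. -/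
open Set

noncomputable section Stmt7Aux

/-- inner affine-ish map `(ν, c, μ) ↦ (-(c ν), ν, μ)` -/
def stmt7m3 (x : ℝ × ℝ × ℝ) : ℝ × ℝ × ℝ := (-(x.2.1 * x.1), x.1, x.2.2)

/-- the ν-derivative of `x ↦ G (stmt7m3 x)` -/
def stmt7F2 (G : ℝ × ℝ × ℝ → ℝ) (x : ℝ × ℝ × ℝ) : ℝ :=
  fderiv ℝ G (stmt7m3 x) (-x.2.1, 1, 0)

lemma stmt7_contDiff_m3 : ContDiff ℝ (⊤ : ℕ∞) stmt7m3 := by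
  unfold stmt7m3; fun_prop

lemma stmt7_lineDeriv {f : ℝ × ℝ × ℝ → ℝ} {p : ℝ → ℝ × ℝ × ℝ} {t : ℝ} {v : ℝ × ℝ × ℝ}
    (hf : DifferentiableAt ℝ f (p t)) (hp : HasDerivAt p v t) :
    HasDerivAt (fun s => f (p s)) (fderiv ℝ f (p t) v) t :=
  hf.hasFDerivAt.comp_hasDerivAt t hp

lemma stmt7_path_nu (c μ ν : ℝ) :
    HasDerivAt (fun ν' : ℝ => ((-(c * ν'), ν', μ) : ℝ × ℝ × ℝ)) (-c, 1, 0) ν := by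
  have h1 : HasDerivAt (fun ν' : ℝ => -(c * ν')) (-c) ν := by
    simpa only [neg_mul, mul_one, id] using (hasDerivAt_id ν).const_mul (-c)
  exact h1.prodMk ((hasDerivAt_id ν).prodMk (hasDerivAt_const ν μ))

lemma stmt7_path_c (ν μ c : ℝ) :
    HasDerivAt (fun c' : ℝ => ((-(c' * ν), ν, μ) : ℝ × ℝ × ℝ)) (-ν, 0, 0) c := by
  have h1 : HasDerivAt (fun c' : ℝ => -(c' * ν)) (-ν) c := by
    simpa only [mul_neg, one_mul, id] using (hasDerivAt_id c).mul_const (-ν)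
  exact h1.prodMk ((hasDerivAt_const c ν).prodMk (hasDerivAt_const c μ))

lemma stmt7_path_l (a ν μ l : ℝ) :
    HasDerivAt (fun l' : ℝ => ((l' - a, ν, μ) : ℝ × ℝ × ℝ)) (1, 0, 0) l := by
  have h1 : HasDerivAt (fun l' : ℝ => l' - a) 1 l := (hasDerivAt_id l).sub_const a
  exact h1.prodMk ((hasDerivAt_const l ν).prodMk (hasDerivAt_const l μ))

lemma stmt7_path_e1 (c μ ν : ℝ) :
    HasDerivAt (fun t : ℝ => ((t, c, μ) : ℝ × ℝ × ℝ)) (1, 0, 0) ν :=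
  (hasDerivAt_id ν).prodMk ((hasDerivAt_const ν c).prodMk (hasDerivAt_const ν μ))

lemma stmt7_path_e2 (ν μ c : ℝ) :
    HasDerivAt (fun c' : ℝ => ((ν, c', μ) : ℝ × ℝ × ℝ)) (0, 1, 0) c :=
  (hasDerivAt_const c ν).prodMk ((hasDerivAt_id c).prodMk (hasDerivAt_const c μ))

lemma stmt7_contDiff_F2 {G : ℝ × ℝ × ℝ → ℝ} (hG : ContDiff ℝ (⊤ : ℕ∞) G) :
    ContDiff ℝ (⊤ : ℕ∞) (stmt7F2 G) := by
  have h1 : ContDiff ℝ (⊤ : ℕ∞) fun x => fderiv ℝ G (stmt7m3 x) :=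
    (hG.fderiv_right (m := (⊤ : ℕ∞)) (by simp)).comp stmt7_contDiff_m3
  have h2 : ContDiff ℝ (⊤ : ℕ∞) fun x : ℝ × ℝ × ℝ => ((-x.2.1, 1, 0) : ℝ × ℝ × ℝ) := by fun_prop
  exact h1.clm_apply h2

lemma stmt7_hasDerivAt_nu {G : ℝ × ℝ × ℝ → ℝ} (hG : ContDiff ℝ (⊤ : ℕ∞) G) (c μ ν : ℝ) :
    HasDerivAt (fun ν' : ℝ => G (-(c * ν'), ν', μ)) (stmt7F2 G (ν, c, μ)) ν := by
  have h := stmt7_lineDeriv (f := G) (p := fun ν' : ℝ => ((-(c * ν'), ν', μ) : ℝ × ℝ × ℝ))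
    ((hG.differentiable (by simp)).differentiableAt) (stmt7_path_nu c μ ν)
  exact h

lemma stmt7_deriv_nu {G : ℝ × ℝ × ℝ → ℝ} (hG : ContDiff ℝ (⊤ : ℕ∞) G) (c μ ν : ℝ) :
    deriv (fun ν' : ℝ => G (-(c * ν'), ν', μ)) ν = stmt7F2 G (ν, c, μ) :=
  (stmt7_hasDerivAt_nu hG c μ ν).deriv

lemma stmt7_iteratedDeriv_two {G : ℝ × ℝ × ℝ → ℝ} (hG : ContDiff ℝ (⊤ : ℕ∞) G) (c μ ν : ℝ) :
    iteratedDeriv 2 (fun ν' : ℝ => G (-(c * ν'), ν', μ)) ν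
      = fderiv ℝ (stmt7F2 G) (ν, c, μ) (1, 0, 0) := by
  rw [show (2 : ℕ) = 1 + 1 from rfl, iteratedDeriv_succ, iteratedDeriv_one]
  have hde : deriv (fun ν' : ℝ => G (-(c * ν'), ν', μ)) = fun ν' => stmt7F2 G (ν', c, μ) :=
    funext fun ν' => stmt7_deriv_nu hG c μ ν'
  rw [hde]
  exact (stmt7_lineDeriv (f := stmt7F2 G) (p := fun t : ℝ => ((t, c, μ) : ℝ × ℝ × ℝ))
    (((stmt7_contDiff_F2 hG).differentiable (by simp)).differentiableAt)
    (stmt7_path_e1 c μ ν)).deriv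

lemma stmt7_deriv_lam {G : ℝ × ℝ × ℝ → ℝ} (hG : ContDiff ℝ (⊤ : ℕ∞) G) (ν c μ : ℝ) :
    deriv (fun l : ℝ => G (l - c * ν, ν, μ)) 0 = fderiv ℝ G (stmt7m3 (ν, c, μ)) (1, 0, 0) := by
  have h := (stmt7_lineDeriv (f := G) (p := fun l : ℝ => ((l - c * ν, ν, μ) : ℝ × ℝ × ℝ))
    ((hG.differentiable (by simp)).differentiableAt) (stmt7_path_l (c * ν) ν μ 0)).deriv
  simpa [stmt7m3, zero_sub] using h

lemma stmt7_deriv_c {G : ℝ × ℝ × ℝ → ℝ} (hG : ContDiff ℝ (⊤ : ℕ∞) G) (ν μ c : ℝ) :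
    deriv (fun c' : ℝ => G (-(c' * ν), ν, μ)) c
      = fderiv ℝ G (stmt7m3 (ν, c, μ)) (-ν, 0, 0) := by
  exact (stmt7_lineDeriv (f := G) (p := fun c' : ℝ => ((-(c' * ν), ν, μ) : ℝ × ℝ × ℝ))
    ((hG.differentiable (by simp)).differentiableAt) (stmt7_path_c ν μ c)).deriv

/-- Pinning the double root at `λ = 0` by adjusting the speed: if
`d(λ, ν, c, μ) = D(λ − cν, ν, μ)` has a simple double root at
`(λ, ν, c, μ) = (0, ν₀, c₀, 0)` with `ν₀ ≠ 0`, then there are smooth functions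
`c_lin(μ)`, `ν_lin(μ)` with `c_lin(0) = c₀`, `ν_lin(0) = ν₀` such that
`(0, ν_lin(μ))` is a simple double root of `d(·, ·, c_lin(μ), μ)`. -/
theorem stmt7 (D : ℝ → ℝ → ℝ → ℝ)
    (hD : ContDiff ℝ (⊤ : ℕ∞) (fun p : ℝ × ℝ × ℝ => D p.1 p.2.1 p.2.2))
    (d : ℝ → ℝ → ℝ → ℝ → ℝ)
    (hd : ∀ lam nu c μ : ℝ, d lam nu c μ = D (lam - c * nu) nu μ)
    (ν₀ c₀ : ℝ) (hν₀ : ν₀ ≠ 0)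
    (h0 : d 0 ν₀ c₀ 0 = 0)
    (h1 : deriv (fun ν : ℝ => d 0 ν c₀ 0) ν₀ = 0)
    (h2 : iteratedDeriv 2 (fun ν : ℝ => d 0 ν c₀ 0) ν₀ ≠ 0)
    (h3 : deriv (fun l : ℝ => d l ν₀ c₀ 0) 0 ≠ 0) :
    ∃ ε : ℝ, 0 < ε ∧ ∃ clin nulin : ℝ → ℝ,
      ContDiffOn ℝ (⊤ : ℕ∞) clin (Set.Ioo (-ε) ε) ∧
      ContDiffOn ℝ (⊤ : ℕ∞) nulin (Set.Ioo (-ε) ε) ∧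
      clin 0 = c₀ ∧ nulin 0 = ν₀ ∧
      ∀ μ ∈ Set.Ioo (-ε) ε,
        d 0 (nulin μ) (clin μ) μ = 0 ∧
        deriv (fun ν : ℝ => d 0 ν (clin μ) μ) (nulin μ) = 0 ∧
        iteratedDeriv 2 (fun ν : ℝ => d 0 ν (clin μ) μ) (nulin μ) ≠ 0 ∧
        deriv (fun l : ℝ => d l (nulin μ) (clin μ) μ) 0 ≠ 0 := by
  classical
  set G : ℝ × ℝ × ℝ → ℝ := fun p => D p.1 p.2.1 p.2.2 with hGdef
  have hG : ContDiff ℝ (⊤ : ℕ∞) G := hD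
  have hGdiff : Differentiable ℝ G := hG.differentiable (by simp)
  have hF2 : ContDiff ℝ (⊤ : ℕ∞) (stmt7F2 G) := stmt7_contDiff_F2 hG
  have hGm3 : ContDiff ℝ (⊤ : ℕ∞) (fun x => G (stmt7m3 x)) := hG.comp stmt7_contDiff_m3
  -- translation of d to G
  have hd0 : ∀ ν c μ : ℝ, d 0 ν c μ = G (-(c * ν), ν, μ) := by
    intro ν c μ; rw [hd]; simp [hGdef, zero_sub]
  have hfun0 : ∀ c μ : ℝ, (fun ν : ℝ => d 0 ν c μ) = fun ν : ℝ => G (-(c * ν), ν, μ) :=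
    fun c μ => funext fun ν => hd0 ν c μ
  -- values at the base point
  have hΦ1 : G (stmt7m3 (ν₀, c₀, 0)) = 0 := by
    rw [show stmt7m3 (ν₀, c₀, 0) = (-(c₀ * ν₀), ν₀, 0) from rfl, ← hd0]; exact h0
  have hΦ2 : stmt7F2 G (ν₀, c₀, 0) = 0 := by
    rw [← stmt7_deriv_nu hG c₀ 0 ν₀, ← hfun0]; exact h1
  -- the derivative of Φ at the base point
  set K₁ := fderiv ℝ (fun x => G (stmt7m3 x)) (ν₀, c₀, 0) with hK₁def
  set K₂ := fderiv ℝ (stmt7F2 G) (ν₀, c₀, 0) with hK₂def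
  set K₃ : ℝ × ℝ × ℝ →L[ℝ] ℝ :=
    (ContinuousLinearMap.snd ℝ ℝ ℝ).comp (ContinuousLinearMap.snd ℝ ℝ (ℝ × ℝ)) with hK₃def
  have hK1 : HasFDerivAt (fun x => G (stmt7m3 x)) K₁ (ν₀, c₀, 0) :=
    ((hGm3.differentiable (by simp)) _).hasFDerivAt
  have hK2 : HasFDerivAt (stmt7F2 G) K₂ (ν₀, c₀, 0) :=
    ((hF2.differentiable (by simp)) _).hasFDerivAt
  have hK3 : HasFDerivAt (fun x : ℝ × ℝ × ℝ => x.2.2) K₃ (ν₀, c₀, 0) := K₃.hasFDerivAt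
  set Φ : ℝ × ℝ × ℝ → ℝ × ℝ × ℝ := fun x => (G (stmt7m3 x), stmt7F2 G x, x.2.2) with hΦdef
  set K := K₁.prod (K₂.prod K₃) with hKdef
  have hΦc : ContDiff ℝ (⊤ : ℕ∞) Φ :=
    hGm3.prodMk (hF2.prodMk (contDiff_snd.comp contDiff_snd))
  have hK : HasFDerivAt Φ K (ν₀, c₀, 0) := hK1.prodMk (hK2.prodMk hK3)
  have hKapp : ∀ e : ℝ × ℝ × ℝ, K e = (K₁ e, K₂ e, e.2.2) := by
    intro e; simp [hKdef, hK₃def]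
  -- basis values
  have hK1e1 : K₁ (1, 0, 0) = 0 := by
    have h := (stmt7_lineDeriv (f := fun x => G (stmt7m3 x))
      (p := fun t : ℝ => ((t, c₀, 0) : ℝ × ℝ × ℝ))
      ((hGm3.differentiable (by simp)) _) (stmt7_path_e1 c₀ 0 ν₀)).deriv
    rw [← h]
    have he : (fun t : ℝ => G (stmt7m3 (t, c₀, 0))) = fun ν : ℝ => d 0 ν c₀ 0 := by
      funext t; rw [hd0]; rfl
    rw [he]; exact h1
  have hK1e2 : K₁ (0, 1, 0) = (-ν₀) * (fderiv ℝ G (stmt7m3 (ν₀, c₀, 0)) (1, 0, 0)) := by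
    have h := (stmt7_lineDeriv (f := fun x => G (stmt7m3 x))
      (p := fun c' : ℝ => ((ν₀, c', 0) : ℝ × ℝ × ℝ))
      ((hGm3.differentiable (by simp)) _) (stmt7_path_e2 ν₀ 0 c₀)).deriv
    have h' := stmt7_deriv_c hG ν₀ 0 c₀
    rw [← h]
    have he : (fun c' : ℝ => G (stmt7m3 (ν₀, c', 0))) = fun c' : ℝ => G (-(c' * ν₀), ν₀, 0) :=
      rfl
    rw [he, h']
    have hv : ((-ν₀, 0, 0) : ℝ × ℝ × ℝ) = (-ν₀) • ((1, 0, 0) : ℝ × ℝ × ℝ) := by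
      simp
    rw [hv, map_smul, smul_eq_mul]
  have hK2e1 : K₂ (1, 0, 0) = iteratedDeriv 2 (fun ν : ℝ => d 0 ν c₀ 0) ν₀ := by
    rw [hfun0 c₀ 0, stmt7_iteratedDeriv_two hG c₀ 0 ν₀]
  have hE : K₂ (1, 0, 0) ≠ 0 := by rw [hK2e1]; exact h2
  have hA : fderiv ℝ G (stmt7m3 (ν₀, c₀, 0)) (1, 0, 0) ≠ 0 := by
    rw [← stmt7_deriv_lam hG ν₀ c₀ 0]
    have he : (fun l : ℝ => G (l - c₀ * ν₀, ν₀, 0)) = fun l : ℝ => d l ν₀ c₀ 0 := by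
      funext l; rw [hd]
    rw [he]; exact h3
  -- injectivity of K
  have hKinj : Function.Injective K.toLinearMap := by
    apply (injective_iff_map_eq_zero (K.toLinearMap)).mpr
    rintro ⟨a, b, mm⟩ hu
    have hdec : ((a, b, mm) : ℝ × ℝ × ℝ)
        = a • ((1, 0, 0) : ℝ × ℝ × ℝ) + b • ((0, 1, 0) : ℝ × ℝ × ℝ)
          + mm • ((0, 0, 1) : ℝ × ℝ × ℝ) := by
      simp [Prod.ext_iff]
    rw [hdec, map_add, map_add, map_smul, map_smul, map_smul] at hu
    simp only [ContinuousLinearMap.coe_coe] at hu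
    rw [hKapp, hKapp, hKapp] at hu
    have hm : mm = 0 := by
      have := congrArg (fun p : ℝ × ℝ × ℝ => p.2.2) hu
      simpa using this
    have hb : b = 0 := by
      have h := congrArg (fun p : ℝ × ℝ × ℝ => p.1) hu
      simp only [Prod.fst_add, Prod.smul_fst, smul_eq_mul, Prod.fst_zero] at h
      rw [hK1e1, hK1e2, hm] at h
      simp only [mul_zero, zero_mul, zero_add, add_zero] at h
      rcases mul_eq_zero.mp h with hb | hcontra
      · exact hb
      · exact absurd hcontra (mul_ne_zero (neg_ne_zero.mpr hν₀) hA)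
    have ha : a = 0 := by
      have h := congrArg (fun p : ℝ × ℝ × ℝ => p.2.1) hu
      simp only [Prod.snd_add, Prod.fst_add, Prod.smul_snd, Prod.smul_fst, smul_eq_mul,
        Prod.snd_zero, Prod.fst_zero] at h
      rw [hm, hb] at h
      simp only [mul_zero, zero_mul, add_zero, zero_add] at h
      rcases mul_eq_zero.mp h with ha | hcontra
      · exact ha
      · exact absurd hcontra hE
    simp [ha, hb, hm, Prod.ext_iff]
  have hKbij : Function.Bijective K.toLinearMap :=
    ⟨hKinj, LinearMap.injective_iff_surjective.mp hKinj⟩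
  set J := (LinearEquiv.ofBijective K.toLinearMap hKbij).toContinuousLinearEquiv with hJdef
  have hJcoe : (J : ℝ × ℝ × ℝ →L[ℝ] ℝ × ℝ × ℝ) = K := by
    exact ContinuousLinearMap.ext fun u => rfl
  have hJK : HasFDerivAt Φ (J : ℝ × ℝ × ℝ →L[ℝ] ℝ × ℝ × ℝ) (ν₀, c₀, 0) := by
    rw [hJcoe]; exact hK
  have hΦat : ContDiffAt ℝ (⊤ : ℕ∞) Φ (ν₀, c₀, 0) := hΦc.contDiffAt
  have hn : ((⊤ : ℕ∞) : WithTop ℕ∞) ≠ 0 := by simp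
  set ψ := hΦat.localInverse hJK hn with hψdef
  have hψat : ContDiffAt ℝ (⊤ : ℕ∞) ψ (Φ (ν₀, c₀, 0)) := hΦat.to_localInverse hJK hn
  have hψ0 : ψ (Φ (ν₀, c₀, 0)) = (ν₀, c₀, 0) := hΦat.localInverse_apply_image hJK hn
  have hrinv : ∀ᶠ y in nhds (Φ (ν₀, c₀, 0)), Φ (ψ y) = y :=
    (hΦat.hasStrictFDerivAt' hJK hn).eventually_right_inverse
  have hΦx0 : Φ (ν₀, c₀, 0) = ((0 : ℝ), (0 : ℝ), (0 : ℝ)) := by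
    rw [hΦdef]; simp only []
    exact Prod.ext hΦ1 (Prod.ext hΦ2 rfl)
  have hg0 : ψ ((0 : ℝ), (0 : ℝ), (0 : ℝ)) = (ν₀, c₀, 0) := by
    rw [← hΦx0]; exact hψ0
  have hembc : ContDiff ℝ (⊤ : ℕ∞) (fun μ : ℝ => (((0 : ℝ), (0 : ℝ), μ) : ℝ × ℝ × ℝ)) := by fun_prop
  have hg : ContDiffAt ℝ (⊤ : ℕ∞) (fun μ : ℝ => ψ (0, 0, μ)) 0 := by
    have h1' : ContDiffAt ℝ (⊤ : ℕ∞) ψ (((0 : ℝ), (0 : ℝ), (0 : ℝ)) : ℝ × ℝ × ℝ) := hΦx0 ▸ hψat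
    exact ContDiffAt.comp 0 h1' hembc.contDiffAt
  have htend : Filter.Tendsto (fun μ : ℝ => (((0 : ℝ), (0 : ℝ), μ) : ℝ × ℝ × ℝ))
      (nhds 0) (nhds (((0 : ℝ), (0 : ℝ), (0 : ℝ)) : ℝ × ℝ × ℝ)) := by
    simpa using (hembc.continuous.tendsto (0 : ℝ))
  have he1 : ∀ᶠ μ in nhds (0 : ℝ), Φ (ψ (0, 0, μ)) = ((0 : ℝ), (0 : ℝ), μ) := by
    have := hrinv; rw [hΦx0] at this
    exact htend.eventually this
  have hθc : Continuous fun x : ℝ × ℝ × ℝ => fderiv ℝ (stmt7F2 G) x ((1 : ℝ), 0, 0) :=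
    (hF2.continuous_fderiv (by simp)).clm_apply continuous_const
  have hξc : Continuous fun x : ℝ × ℝ × ℝ => fderiv ℝ G (stmt7m3 x) ((1 : ℝ), 0, 0) :=
    ((hG.continuous_fderiv (by simp)).comp stmt7_contDiff_m3.continuous).clm_apply
      continuous_const
  have hgc : ContinuousAt (fun μ : ℝ => ψ (0, 0, μ)) 0 := hg.continuousAt
  have he2 : ∀ᶠ μ in nhds (0 : ℝ),
      fderiv ℝ (stmt7F2 G) (ψ (0, 0, μ)) ((1 : ℝ), 0, 0) ≠ 0 := by
    have hc : ContinuousAt (fun μ : ℝ => fderiv ℝ (stmt7F2 G) (ψ (0, 0, μ)) ((1 : ℝ), 0, 0)) 0 :=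
      hθc.continuousAt.comp hgc
    apply hc.eventually_ne
    show fderiv ℝ (stmt7F2 G) (ψ (0, 0, 0)) ((1 : ℝ), 0, 0) ≠ 0
    rw [hg0]; exact hE
  have he3 : ∀ᶠ μ in nhds (0 : ℝ),
      fderiv ℝ G (stmt7m3 (ψ (0, 0, μ))) ((1 : ℝ), 0, 0) ≠ 0 := by
    have hc : ContinuousAt
        (fun μ : ℝ => fderiv ℝ G (stmt7m3 (ψ (0, 0, μ))) ((1 : ℝ), 0, 0)) 0 :=
      hξc.continuousAt.comp hgc
    apply hc.eventually_ne
    show fderiv ℝ G (stmt7m3 (ψ (0, 0, 0))) ((1 : ℝ), 0, 0) ≠ 0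
    rw [hg0]; exact hA
  obtain ⟨u, hu, hgu⟩ : ∃ u ∈ nhds (0 : ℝ),
      ContDiffOn ℝ (⊤ : ℕ∞) (fun μ : ℝ => ψ (0, 0, μ)) u := by
    set P := hΦat.toOpenPartialHomeomorph Φ hJK hn with hPdef
    have hev1 : ∀ᶠ y in nhds (Φ (ν₀, c₀, 0)), y ∈ P.target :=
      P.open_target.mem_nhds (hΦat.image_mem_toOpenPartialHomeomorph_target hJK hn)
    have hev2 : ∀ᶠ y in nhds (Φ (ν₀, c₀, 0)), fderiv ℝ Φ (ψ y) ∈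
        Set.range ((↑) : ((ℝ × ℝ × ℝ) ≃L[ℝ] (ℝ × ℝ × ℝ)) → ((ℝ × ℝ × ℝ) →L[ℝ] (ℝ × ℝ × ℝ))) := by
      have hfc : Continuous (fderiv ℝ Φ) := hΦc.continuous_fderiv (by simp)
      have hct : ContinuousAt (fun y => fderiv ℝ Φ (ψ y)) (Φ (ν₀, c₀, 0)) :=
        hfc.continuousAt.comp hψat.continuousAt
      refine hct.preimage_mem_nhds ?_
      show _ ∈ nhds (fderiv ℝ Φ (ψ (Φ (ν₀, c₀, 0))))
      rw [hψ0, hK.fderiv]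
      exact ContinuousLinearEquiv.isOpen.mem_nhds ⟨J, hJcoe⟩
    have hev : ∀ᶠ y in nhds (Φ (ν₀, c₀, 0)), ContDiffAt ℝ (⊤ : ℕ∞) ψ y := by
      filter_upwards [hev1, hev2] with y hy1 hy2
      obtain ⟨e, he⟩ := hy2
      have hfd : HasFDerivAt Φ (fderiv ℝ Φ (ψ y)) (ψ y) :=
        ((hΦc.differentiable (by simp)) _).hasFDerivAt
      rw [← he] at hfd
      exact P.contDiffAt_symm hy1 (f₀' := e) hfd hΦc.contDiffAt
    rw [hΦx0] at hev
    have hev' : ∀ᶠ μ in nhds (0 : ℝ), ContDiffAt ℝ (⊤ : ℕ∞) (fun μ : ℝ => ψ (0, 0, μ)) μ := by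
      filter_upwards [htend.eventually hev] with μ hμ
      exact hμ.comp μ hembc.contDiffAt
    exact ⟨_, hev', fun μ hμ => ContDiffAt.contDiffWithinAt (show ContDiffAt ℝ (⊤ : ℕ∞) (fun μ : ℝ => ψ (0, 0, μ)) μ from hμ)⟩
  have hall : ∀ᶠ μ in nhds (0 : ℝ),
      (Φ (ψ (0, 0, μ)) = ((0 : ℝ), (0 : ℝ), μ) ∧
        fderiv ℝ (stmt7F2 G) (ψ (0, 0, μ)) ((1 : ℝ), 0, 0) ≠ 0 ∧
        fderiv ℝ G (stmt7m3 (ψ (0, 0, μ))) ((1 : ℝ), 0, 0) ≠ 0) ∧ μ ∈ u := by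
    filter_upwards [he1, he2, he3, hu] with μ a b c e
    exact ⟨⟨a, b, c⟩, e⟩
  obtain ⟨ε, hε, hball⟩ := Metric.mem_nhds_iff.mp hall
  have hsub : Set.Ioo (-ε) ε ⊆ {μ : ℝ |
      (Φ (ψ (0, 0, μ)) = ((0 : ℝ), (0 : ℝ), μ) ∧
        fderiv ℝ (stmt7F2 G) (ψ (0, 0, μ)) ((1 : ℝ), 0, 0) ≠ 0 ∧
        fderiv ℝ G (stmt7m3 (ψ (0, 0, μ))) ((1 : ℝ), 0, 0) ≠ 0) ∧ μ ∈ u} := by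
    rwa [Real.ball_eq_Ioo, zero_sub, zero_add] at hball
  refine ⟨ε, hε, (fun μ => (ψ (0, 0, μ)).2.1), (fun μ => (ψ (0, 0, μ)).1), ?_, ?_, ?_, ?_, ?_⟩
  · exact (contDiff_fst.comp contDiff_snd).comp_contDiffOn
      (hgu.mono fun μ hμ => (hsub hμ).2)
  · exact contDiff_fst.comp_contDiffOn (hgu.mono fun μ hμ => (hsub hμ).2)
  · show (ψ (0, 0, 0)).2.1 = c₀; rw [hg0]
  · show (ψ (0, 0, 0)).1 = ν₀; rw [hg0]
  · intro μ hμ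
    obtain ⟨⟨hΦμ, hθμ, hξμ⟩, hμu⟩ := hsub hμ
    have h₁ : G (stmt7m3 (ψ (0, 0, μ))) = 0 := congrArg Prod.fst hΦμ
    have h₂ : stmt7F2 G (ψ (0, 0, μ)) = 0 := congrArg (fun p : ℝ × ℝ × ℝ => p.2.1) hΦμ
    have h₃ : (ψ (0, 0, μ)).2.2 = μ := congrArg (fun p : ℝ × ℝ × ℝ => p.2.2) hΦμ
    have ht : (((ψ (0, 0, μ)).1, (ψ (0, 0, μ)).2.1, μ) : ℝ × ℝ × ℝ) = ψ (0, 0, μ) :=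
      Prod.ext rfl (Prod.ext rfl h₃.symm)
    refine ⟨?_, ?_, ?_, ?_⟩
    · beta_reduce
      rw [hd0]
      show G (stmt7m3 ((ψ (0, 0, μ)).1, (ψ (0, 0, μ)).2.1, μ)) = 0
      rw [ht]; exact h₁
    · beta_reduce
      rw [hfun0, stmt7_deriv_nu hG, ht]; exact h₂
    · beta_reduce
      rw [hfun0, stmt7_iteratedDeriv_two hG, ht]; exact hθμ
    · beta_reduce
      have he : (fun l : ℝ => d l (ψ (0, 0, μ)).1 (ψ (0, 0, μ)).2.1 μ)
          = fun l : ℝ => G (l - (ψ (0, 0, μ)).2.1 * (ψ (0, 0, μ)).1, (ψ (0, 0, μ)).1, μ) := by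
        funext l; rw [hd]
      rw [he, stmt7_deriv_lam hG, ht]; exact hξμ

end Stmt7Aux
end

section
/- Let n, m ≥ 1, let P₁, …, P_{2m} and M be n×n real matrices, let F : ℝ → Matrix (n×n, ℝ) be smooth, and define A(ν, c, μ) = Σ_{j=1}^{2m} ν^j P_j + cν·M + F(μ). Suppose ν₀ ≠ 0, c₀ ∈ ℝ and u₀⁰, u₁⁰ ∈ ℝⁿ satisfy, with A⁰ = A(ν₀, c₀, 0): (i) A⁰u₀⁰ = 0; (ii) ∂_νA(ν₀, c₀, 0)u₀⁰ + A⁰u₁⁰ = 0; (iii) ker A⁰ is one-dimensional, spanned by u₀⁰; (iv) Mu₀⁰ ∉ range A⁰; (v) (1/2)∂²_{νν}A(ν₀, c₀, 0)u₀⁰ + ∂_νA(ν₀, c₀, 0)u₁⁰ ∉ range A⁰. Then there exist ε > 0 and smooth functions u₀, u₁ : (−ε, ε) → ℝⁿ and c, ν : (−ε, ε) → ℝ with u₀(0) = u₀⁰, u₁(0) = u₁⁰, c(0) = c₀, ν(0) = ν₀, satisfying for all μ ∈ (−ε, ε): A(ν(μ), c(μ), μ)u₀(μ) = 0, ∂_νA(ν(μ),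 c(μ), μ)u₀(μ) + A(ν(μ), c(μ), μ)u₁(μ) = 0, ⟨u₀(μ) − u₀⁰, u₀⁰⟩ = 0, and ⟨u₁(μ) − u₁⁰, u₀⁰⟩ = 0. -/
open Matrix

noncomputable section Stmt8Aux




/-- The symbol. -/
def stmt8Bm (n m : ℕ) (P : ℕ → Matrix (Fin n) (Fin n) ℝ) (M : Matrix (Fin n) (Fin n) ℝ)
    (F : ℝ → Matrix (Fin n) (Fin n) ℝ) (ν c μ : ℝ) : Matrix (Fin n) (Fin n) ℝ :=
  ∑ j ∈ Finset.Icc 1 (2 * m), ν ^ j • P j + (c * ν) • M + F μ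

/-- Its ν-derivative. -/
def stmt8Bn (n m : ℕ) (P : ℕ → Matrix (Fin n) (Fin n) ℝ) (M : Matrix (Fin n) (Fin n) ℝ)
    (ν c : ℝ) : Matrix (Fin n) (Fin n) ℝ :=
  ∑ j ∈ Finset.Icc 1 (2 * m), ((j : ℝ) * ν ^ (j - 1)) • P j + c • M

/-- Its second ν-derivative. -/
def stmt8Bnn (n m : ℕ) (P : ℕ → Matrix (Fin n) (Fin n) ℝ) (ν : ℝ) :
    Matrix (Fin n) (Fin n) ℝ :=
  ∑ j ∈ Finset.Icc 1 (2 * m), ((j : ℝ) * (((j - 1 : ℕ)) : ℝ) * ν ^ (j - 1 - 1)) • P j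

variable {n m : ℕ} {P : ℕ → Matrix (Fin n) (Fin n) ℝ} {M : Matrix (Fin n) (Fin n) ℝ}
  {F : ℝ → Matrix (Fin n) (Fin n) ℝ}

lemma stmt8Bm_apply (ν c μ : ℝ) (i k : Fin n) :
    stmt8Bm n m P M F ν c μ i k =
      (∑ j ∈ Finset.Icc 1 (2 * m), ν ^ j * P j i k) + c * ν * M i k + F μ i k := by
  simp [stmt8Bm, Matrix.sum_apply]

lemma stmt8Bn_apply (ν c : ℝ) (i k : Fin n) :
    stmt8Bn n m P M ν c i k =
      (∑ j ∈ Finset.Icc 1 (2 * m), (j : ℝ) * ν ^ (j - 1) * P j i k) + c * M i k := by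
  simp [stmt8Bn, Matrix.sum_apply]

lemma stmt8Bnn_apply (ν : ℝ) (i k : Fin n) :
    stmt8Bnn n m P ν i k =
      ∑ j ∈ Finset.Icc 1 (2 * m), (j : ℝ) * (((j - 1 : ℕ)) : ℝ) * ν ^ (j - 1 - 1) * P j i k := by
  simp [stmt8Bnn, Matrix.sum_apply]

/-- ν-derivative of the symbol entrywise. -/
lemma stmt8_hasDerivAt_nu (c μ : ℝ) (i k : Fin n) (ν : ℝ) :
    HasDerivAt (fun ν' : ℝ => stmt8Bm n m P M F ν' c μ i k)
      (stmt8Bn n m P M ν c i k) ν := by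
  simp only [stmt8Bm_apply, stmt8Bn_apply]
  have h1 : HasDerivAt (fun ν' : ℝ => ∑ j ∈ Finset.Icc 1 (2 * m), ν' ^ j * P j i k)
      (∑ j ∈ Finset.Icc 1 (2 * m), (j : ℝ) * ν ^ (j - 1) * P j i k) ν :=
    HasDerivAt.fun_sum fun j _ => (hasDerivAt_pow j ν).mul_const _
  have h2 : HasDerivAt (fun ν' : ℝ => c * ν' * M i k) (c * M i k) ν := by
    simpa using (((hasDerivAt_id ν).const_mul c).mul_const (M i k))
  simpa using (h1.add h2).add_const (F μ i k)

/-- second ν-derivative of the symbol entrywise. -/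
lemma stmt8_hasDerivAt_nunu (c : ℝ) (i k : Fin n) (ν : ℝ) :
    HasDerivAt (fun ν' : ℝ => stmt8Bn n m P M ν' c i k)
      (stmt8Bnn n m P ν i k) ν := by
  simp only [stmt8Bn_apply, stmt8Bnn_apply]
  have h1 : HasDerivAt (fun ν' : ℝ => ∑ j ∈ Finset.Icc 1 (2 * m), (j : ℝ) * ν' ^ (j - 1) * P j i k)
      (∑ j ∈ Finset.Icc 1 (2 * m), (j : ℝ) * (((j - 1 : ℕ)) : ℝ) * ν ^ (j - 1 - 1) * P j i k) ν := by
    refine HasDerivAt.fun_sum fun j _ => ?_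
    have := ((hasDerivAt_pow (j - 1) ν).const_mul (j : ℝ)).mul_const (P j i k)
    refine this.congr_deriv (Eq.symm ?_)
    ring
  simpa using h1.add_const (c * M i k)





/-- ambient space -/
abbrev stmt8X (n : ℕ) : Type :=
  ((Fin n → ℝ) × ((Fin n → ℝ) × (ℝ × ℝ))) × ℝ

/-- the full nonlinear map whose zero set we follow. -/
def stmt8Phi (n m : ℕ) (P : ℕ → Matrix (Fin n) (Fin n) ℝ) (M : Matrix (Fin n) (Fin n) ℝ)
    (F : ℝ → Matrix (Fin n) (Fin n) ℝ) (u₀0 u₁0 : Fin n → ℝ) :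
    stmt8X n → stmt8X n := fun x =>
  ((stmt8Bm n m P M F x.1.2.2.2 x.1.2.2.1 x.2 *ᵥ x.1.1,
    (stmt8Bn n m P M x.1.2.2.2 x.1.2.2.1 *ᵥ x.1.1
       + stmt8Bm n m P M F x.1.2.2.2 x.1.2.2.1 x.2 *ᵥ x.1.2.1,
     ((x.1.1 - u₀0) ⬝ᵥ u₀0, (x.1.2.1 - u₁0) ⬝ᵥ u₀0))), x.2)

variable {u₀0 u₁0 : Fin n → ℝ}

lemma stmt8_contDiff_Phi (hF : ∀ i j : Fin n, ContDiff ℝ (⊤ : ℕ∞) (fun μ : ℝ => F μ i j)) :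
    ContDiff ℝ (⊤ : ℕ∞) (stmt8Phi n m P M F u₀0 u₁0) := by
  have hu0 : ∀ k : Fin n, ContDiff ℝ (⊤ : ℕ∞) (fun x : stmt8X n => x.1.1 k) := fun k =>
    contDiff_pi.1 (contDiff_fst.comp contDiff_fst) k
  have hu1 : ∀ k : Fin n, ContDiff ℝ (⊤ : ℕ∞) (fun x : stmt8X n => x.1.2.1 k) := fun k =>
    contDiff_pi.1 (contDiff_fst.comp (contDiff_snd.comp contDiff_fst)) k
  have hc : ContDiff ℝ (⊤ : ℕ∞) (fun x : stmt8X n => x.1.2.2.1) :=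
    contDiff_fst.comp (contDiff_snd.comp (contDiff_snd.comp contDiff_fst))
  have hν : ContDiff ℝ (⊤ : ℕ∞) (fun x : stmt8X n => x.1.2.2.2) :=
    contDiff_snd.comp (contDiff_snd.comp (contDiff_snd.comp contDiff_fst))
  have hμ : ContDiff ℝ (⊤ : ℕ∞) (fun x : stmt8X n => x.2) := contDiff_snd
  have hBm : ∀ i k : Fin n,
      ContDiff ℝ (⊤ : ℕ∞) (fun x : stmt8X n => stmt8Bm n m P M F x.1.2.2.2 x.1.2.2.1 x.2 i k) := by
    intro i k
    have : (fun x : stmt8X n => stmt8Bm n m P M F x.1.2.2.2 x.1.2.2.1 x.2 i k) =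
        fun x : stmt8X n =>
          (∑ j ∈ Finset.Icc 1 (2 * m), x.1.2.2.2 ^ j * P j i k)
            + x.1.2.2.1 * x.1.2.2.2 * M i k + F x.2 i k := by
      funext x; simp [stmt8Bm, Matrix.sum_apply]
    rw [this]
    exact ((ContDiff.sum fun j _ => (hν.pow j).mul contDiff_const).add
      ((hc.mul hν).mul contDiff_const)).add ((hF i k).comp hμ)
  have hBn : ∀ i k : Fin n,
      ContDiff ℝ (⊤ : ℕ∞) (fun x : stmt8X n => stmt8Bn n m P M x.1.2.2.2 x.1.2.2.1 i k) := by
    intro i k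
    have : (fun x : stmt8X n => stmt8Bn n m P M x.1.2.2.2 x.1.2.2.1 i k) =
        fun x : stmt8X n =>
          (∑ j ∈ Finset.Icc 1 (2 * m), (j : ℝ) * x.1.2.2.2 ^ (j - 1) * P j i k)
            + x.1.2.2.1 * M i k := by
      funext x; simp [stmt8Bn, Matrix.sum_apply]
    rw [this]
    exact (ContDiff.sum fun j _ => ((contDiff_const.mul (hν.pow (j - 1)))).mul contDiff_const).add
      (hc.mul contDiff_const)
  refine ContDiff.prodMk (ContDiff.prodMk ?_ (ContDiff.prodMk ?_ (ContDiff.prodMk ?_ ?_))) hμ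
  · refine contDiff_pi.2 fun i => ?_
    have : (fun x : stmt8X n => (stmt8Bm n m P M F x.1.2.2.2 x.1.2.2.1 x.2 *ᵥ x.1.1) i) =
        fun x : stmt8X n => ∑ k, stmt8Bm n m P M F x.1.2.2.2 x.1.2.2.1 x.2 i k * x.1.1 k := by
      funext x; simp [Matrix.mulVec, dotProduct]
    rw [this]
    exact ContDiff.sum fun k _ => (hBm i k).mul (hu0 k)
  · refine contDiff_pi.2 fun i => ?_
    have : (fun x : stmt8X n =>
        (stmt8Bn n m P M x.1.2.2.2 x.1.2.2.1 *ᵥ x.1.1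
          + stmt8Bm n m P M F x.1.2.2.2 x.1.2.2.1 x.2 *ᵥ x.1.2.1) i) =
        fun x : stmt8X n =>
          (∑ k, stmt8Bn n m P M x.1.2.2.2 x.1.2.2.1 i k * x.1.1 k)
            + ∑ k, stmt8Bm n m P M F x.1.2.2.2 x.1.2.2.1 x.2 i k * x.1.2.1 k := by
      funext x; simp [Matrix.mulVec, dotProduct]
    rw [this]
    exact (ContDiff.sum fun k _ => (hBn i k).mul (hu0 k)).add
      (ContDiff.sum fun k _ => (hBm i k).mul (hu1 k))
  · have : (fun x : stmt8X n => (x.1.1 - u₀0) ⬝ᵥ u₀0) =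
        fun x : stmt8X n => ∑ k, (x.1.1 k - u₀0 k) * u₀0 k := by
      funext x; simp [dotProduct]
    rw [this]
    exact ContDiff.sum fun k _ => ((hu0 k).sub contDiff_const).mul contDiff_const
  · have : (fun x : stmt8X n => (x.1.2.1 - u₁0) ⬝ᵥ u₀0) =
        fun x : stmt8X n => ∑ k, (x.1.2.1 k - u₁0 k) * u₀0 k := by
      funext x; simp [dotProduct]
    rw [this]
    exact ContDiff.sum fun k _ => ((hu1 k).sub contDiff_const).mul contDiff_const




/-- derivative of `F` at `0`, as a matrix. -/
def stmt8F' (n : ℕ) (F : ℝ → Matrix (Fin n) (Fin n) ℝ) : Matrix (Fin n) (Fin n) ℝ :=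
  Matrix.of fun i k => deriv (fun μ : ℝ => F μ i k) 0



/-- derivative of `s ↦ B(s) *ᵥ (u + s • v)` at `0`. -/
lemma stmt8_hasDerivAt_mulVec (Bf : ℝ → Matrix (Fin n) (Fin n) ℝ)
    (B' : Matrix (Fin n) (Fin n) ℝ) (u v : Fin n → ℝ)
    (h : ∀ i k, HasDerivAt (fun s => Bf s i k) (B' i k) 0) :
    HasDerivAt (fun s => Bf s *ᵥ (u + s • v)) (B' *ᵥ u + Bf 0 *ᵥ v) 0 := by
  rw [hasDerivAt_pi]
  intro i
  have key : ∀ k : Fin n, HasDerivAt (fun s : ℝ => Bf s i k * (u k + s * v k))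
      (B' i k * u k + Bf 0 i k * v k) 0 := by
    intro k
    have hlin : HasDerivAt (fun s : ℝ => u k + s * v k) (v k) 0 :=
      (hasDerivAt_mul_const (v k)).const_add (u k)
    simpa using (h i k).fun_mul hlin
  have := HasDerivAt.fun_sum (fun k (_ : k ∈ Finset.univ) => key k)
  have heq : (∑ k, (B' i k * u k + Bf 0 i k * v k)) = (B' *ᵥ u + Bf 0 *ᵥ v) i := by
    simp [Matrix.mulVec, dotProduct, Finset.sum_add_distrib]
  rw [← heq]
  have hfun : (fun s => (Bf s *ᵥ (u + s • v)) i) =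
      fun s : ℝ => ∑ k, Bf s i k * (u k + s * v k) := by
    funext s; simp [Matrix.mulVec, dotProduct]
  rw [hfun]
  exact this

/-- entrywise derivative of the symbol along the affine curve. -/
lemma stmt8_hasDerivAt_Bm_curve (ν₀ c₀ δ γ t : ℝ)
    (hF : ∀ i j : Fin n, ContDiff ℝ (⊤ : ℕ∞) (fun μ : ℝ => F μ i j)) (i k : Fin n) :
    HasDerivAt (fun s : ℝ => stmt8Bm n m P M F (ν₀ + s * δ) (c₀ + s * γ) (s * t) i k)
      ((δ • stmt8Bn n m P M ν₀ c₀ + (γ * ν₀) • M + t • stmt8F' n F) i k) 0 := by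
  have hν : HasDerivAt (fun s : ℝ => ν₀ + s * δ) δ 0 :=
    (hasDerivAt_mul_const δ).const_add ν₀
  have hc : HasDerivAt (fun s : ℝ => c₀ + s * γ) γ 0 :=
    (hasDerivAt_mul_const γ).const_add c₀
  have h1 : HasDerivAt (fun s : ℝ => ∑ j ∈ Finset.Icc 1 (2 * m), (ν₀ + s * δ) ^ j * P j i k)
      (∑ j ∈ Finset.Icc 1 (2 * m), (j : ℝ) * ν₀ ^ (j - 1) * δ * P j i k) 0 := by
    refine HasDerivAt.fun_sum fun j _ => ?_
    have := (hν.pow j).mul_const (P j i k)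
    simpa using this
  have h2 : HasDerivAt (fun s : ℝ => (c₀ + s * γ) * (ν₀ + s * δ) * M i k)
      ((γ * ν₀ + c₀ * δ) * M i k) 0 := by
    have := (hc.mul hν).mul_const (M i k)
    simpa using this
  have h3 : HasDerivAt (fun s : ℝ => F (s * t) i k) (t * deriv (fun μ : ℝ => F μ i k) 0) 0 := by
    have hd : HasDerivAt (fun μ : ℝ => F μ i k) (deriv (fun μ : ℝ => F μ i k) 0) 0 :=
      (((hF i k).differentiable (by simp)) 0).hasDerivAt
    have hinner : HasDerivAt (fun s : ℝ => s * t) t 0 := hasDerivAt_mul_const t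
    have hd2 : HasDerivAt (fun μ : ℝ => F μ i k) (deriv (fun μ : ℝ => F μ i k) 0)
        ((fun s : ℝ => s * t) 0) := by simpa using hd
    have := hd2.comp 0 hinner
    simpa [mul_comm, Function.comp_def] using this
  have := (h1.add h2).add h3
  have heq : (fun s : ℝ => stmt8Bm n m P M F (ν₀ + s * δ) (c₀ + s * γ) (s * t) i k) =
      fun s : ℝ => (∑ j ∈ Finset.Icc 1 (2 * m), (ν₀ + s * δ) ^ j * P j i k)
        + (c₀ + s * γ) * (ν₀ + s * δ) * M i k + F (s * t) i k := by
    funext s; simp [stmt8Bm, Matrix.sum_apply]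
  rw [heq]
  refine this.congr_deriv (Eq.symm ?_)
  simp [stmt8Bn, stmt8F', Matrix.sum_apply, Finset.mul_sum, Finset.sum_add_distrib]
  have hsum : ∑ j ∈ Finset.Icc 1 (2 * m), δ * ((j : ℝ) * ν₀ ^ (j - 1) * P j i k) =
      ∑ j ∈ Finset.Icc 1 (2 * m), (j : ℝ) * ν₀ ^ (j - 1) * δ * P j i k :=
    Finset.sum_congr rfl fun j _ => by ring
  rw [hsum]
  ring

/-- entrywise derivative of the ν-derivative symbol along the affine curve. -/
lemma stmt8_hasDerivAt_Bn_curve (ν₀ c₀ δ γ : ℝ) (i k : Fin n) :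
    HasDerivAt (fun s : ℝ => stmt8Bn n m P M (ν₀ + s * δ) (c₀ + s * γ) i k)
      ((δ • stmt8Bnn n m P ν₀ + γ • M) i k) 0 := by
  have hν : HasDerivAt (fun s : ℝ => ν₀ + s * δ) δ 0 :=
    (hasDerivAt_mul_const δ).const_add ν₀
  have h1 : HasDerivAt
      (fun s : ℝ => ∑ j ∈ Finset.Icc 1 (2 * m), (j : ℝ) * (ν₀ + s * δ) ^ (j - 1) * P j i k)
      (∑ j ∈ Finset.Icc 1 (2 * m),
        (j : ℝ) * (((j - 1 : ℕ)) : ℝ) * ν₀ ^ (j - 1 - 1) * δ * P j i k) 0 := by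
    refine HasDerivAt.fun_sum fun j _ => ?_
    have := ((hν.pow (j - 1)).const_mul (j : ℝ)).mul_const (P j i k)
    refine this.congr_deriv (Eq.symm ?_)
    ring
  have hc : HasDerivAt (fun s : ℝ => c₀ + s * γ) γ 0 :=
    (hasDerivAt_mul_const γ).const_add c₀
  have h2 : HasDerivAt (fun s : ℝ => (c₀ + s * γ) * M i k) (γ * M i k) 0 :=
    hc.mul_const (M i k)
  have := h1.add h2
  have heq : (fun s : ℝ => stmt8Bn n m P M (ν₀ + s * δ) (c₀ + s * γ) i k) =
      fun s : ℝ => (∑ j ∈ Finset.Icc 1 (2 * m), (j : ℝ) * (ν₀ + s * δ) ^ (j - 1) * P j i k)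
        + (c₀ + s * γ) * M i k := by
    funext s; simp [stmt8Bn, Matrix.sum_apply]
  rw [heq]
  refine this.congr_deriv (Eq.symm ?_)
  simp [stmt8Bnn, Matrix.sum_apply, Finset.mul_sum]
  have hsum : ∑ j ∈ Finset.Icc 1 (2 * m),
      δ * ((j : ℝ) * (((j - 1 : ℕ)) : ℝ) * ν₀ ^ (j - 1 - 1) * P j i k) =
      ∑ j ∈ Finset.Icc 1 (2 * m),
      (j : ℝ) * (((j - 1 : ℕ)) : ℝ) * ν₀ ^ (j - 1 - 1) * δ * P j i k :=
    Finset.sum_congr rfl fun j _ => by ring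
  rw [hsum]



variable {ν₀ c₀ : ℝ}

/-- the derivative of `stmt8Phi` at the base point, computed explicitly. -/
lemma stmt8_fderiv_apply (hF : ∀ i j : Fin n, ContDiff ℝ (⊤ : ℕ∞) (fun μ : ℝ => F μ i j))
    (v₀ v₁ : Fin n → ℝ) (γ δ t : ℝ) :
    fderiv ℝ (stmt8Phi n m P M F u₀0 u₁0) ((u₀0, (u₁0, (c₀, ν₀))), (0 : ℝ))
        ((v₀, (v₁, (γ, δ))), t) =
      (((δ • stmt8Bn n m P M ν₀ c₀ + (γ * ν₀) • M + t • stmt8F' n F) *ᵥ u₀0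
          + stmt8Bm n m P M F ν₀ c₀ 0 *ᵥ v₀,
        ((δ • stmt8Bnn n m P ν₀ + γ • M) *ᵥ u₀0 + stmt8Bn n m P M ν₀ c₀ *ᵥ v₀
            + ((δ • stmt8Bn n m P M ν₀ c₀ + (γ * ν₀) • M + t • stmt8F' n F) *ᵥ u₁0
              + stmt8Bm n m P M F ν₀ c₀ 0 *ᵥ v₁),
         (v₀ ⬝ᵥ u₀0, v₁ ⬝ᵥ u₀0))), t) := by
  set a₀ : stmt8X n := ((u₀0, (u₁0, (c₀, ν₀))), (0 : ℝ)) with ha₀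
  set w : stmt8X n := ((v₀, (v₁, (γ, δ))), t) with hw
  have hdiff : Differentiable ℝ (stmt8Phi n m P M F u₀0 u₁0) :=
    (stmt8_contDiff_Phi hF).differentiable (by simp)
  have hcurve : HasDerivAt (fun s : ℝ => a₀ + s • w) w 0 := by
    simpa using ((hasDerivAt_id (0 : ℝ)).smul_const w).const_add a₀
  have hΦw : HasDerivAt (fun s : ℝ => stmt8Phi n m P M F u₀0 u₁0 (a₀ + s • w))
      (fderiv ℝ (stmt8Phi n m P M F u₀0 u₁0) a₀ w) 0 := by
    have hΦa : HasFDerivAt (stmt8Phi n m P M F u₀0 u₁0)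
        (fderiv ℝ (stmt8Phi n m P M F u₀0 u₁0) a₀) (a₀ + (0 : ℝ) • w) := by
      simpa using (hdiff a₀).hasFDerivAt
    exact hΦa.comp_hasDerivAt 0 hcurve
  have hfun : (fun s : ℝ => stmt8Phi n m P M F u₀0 u₁0 (a₀ + s • w)) =
      fun s : ℝ =>
        ((stmt8Bm n m P M F (ν₀ + s * δ) (c₀ + s * γ) (s * t) *ᵥ (u₀0 + s • v₀),
          (stmt8Bn n m P M (ν₀ + s * δ) (c₀ + s * γ) *ᵥ (u₀0 + s • v₀)
             + stmt8Bm n m P M F (ν₀ + s * δ) (c₀ + s * γ) (s * t) *ᵥ (u₁0 + s • v₁),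
           (((u₀0 + s • v₀) - u₀0) ⬝ᵥ u₀0, ((u₁0 + s • v₁) - u₁0) ⬝ᵥ u₀0))), s * t) := by
    funext s
    simp [stmt8Phi, ha₀, hw, Prod.add_def, Prod.smul_def, smul_eq_mul, add_comm]
  have c1 : HasDerivAt
      (fun s : ℝ => stmt8Bm n m P M F (ν₀ + s * δ) (c₀ + s * γ) (s * t) *ᵥ (u₀0 + s • v₀))
      ((δ • stmt8Bn n m P M ν₀ c₀ + (γ * ν₀) • M + t • stmt8F' n F) *ᵥ u₀0
        + stmt8Bm n m P M F ν₀ c₀ 0 *ᵥ v₀) 0 := by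
    have := stmt8_hasDerivAt_mulVec
      (fun s : ℝ => stmt8Bm n m P M F (ν₀ + s * δ) (c₀ + s * γ) (s * t)) _ u₀0 v₀
      (fun i k => stmt8_hasDerivAt_Bm_curve ν₀ c₀ δ γ t hF i k)
    simpa using this
  have c1' : HasDerivAt
      (fun s : ℝ => stmt8Bm n m P M F (ν₀ + s * δ) (c₀ + s * γ) (s * t) *ᵥ (u₁0 + s • v₁))
      ((δ • stmt8Bn n m P M ν₀ c₀ + (γ * ν₀) • M + t • stmt8F' n F) *ᵥ u₁0
        + stmt8Bm n m P M F ν₀ c₀ 0 *ᵥ v₁) 0 := by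
    have := stmt8_hasDerivAt_mulVec
      (fun s : ℝ => stmt8Bm n m P M F (ν₀ + s * δ) (c₀ + s * γ) (s * t)) _ u₁0 v₁
      (fun i k => stmt8_hasDerivAt_Bm_curve ν₀ c₀ δ γ t hF i k)
    simpa using this
  have c2 : HasDerivAt
      (fun s : ℝ => stmt8Bn n m P M (ν₀ + s * δ) (c₀ + s * γ) *ᵥ (u₀0 + s • v₀))
      ((δ • stmt8Bnn n m P ν₀ + γ • M) *ᵥ u₀0 + stmt8Bn n m P M ν₀ c₀ *ᵥ v₀) 0 := by
    have := stmt8_hasDerivAt_mulVec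
      (fun s : ℝ => stmt8Bn n m P M (ν₀ + s * δ) (c₀ + s * γ)) _ u₀0 v₀
      (fun i k => stmt8_hasDerivAt_Bn_curve ν₀ c₀ δ γ i k)
    simpa using this
  have c3 : HasDerivAt (fun s : ℝ => ((u₀0 + s • v₀) - u₀0) ⬝ᵥ u₀0) (v₀ ⬝ᵥ u₀0) 0 := by
    have : (fun s : ℝ => ((u₀0 + s • v₀) - u₀0) ⬝ᵥ u₀0) = fun s : ℝ => s * (v₀ ⬝ᵥ u₀0) := by
      funext s; simp [smul_dotProduct]
    rw [this]; exact hasDerivAt_mul_const _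
  have c4 : HasDerivAt (fun s : ℝ => ((u₁0 + s • v₁) - u₁0) ⬝ᵥ u₀0) (v₁ ⬝ᵥ u₀0) 0 := by
    have : (fun s : ℝ => ((u₁0 + s • v₁) - u₁0) ⬝ᵥ u₀0) = fun s : ℝ => s * (v₁ ⬝ᵥ u₀0) := by
      funext s; simp [smul_dotProduct]
    rw [this]; exact hasDerivAt_mul_const _
  have c5 : HasDerivAt (fun s : ℝ => s * t) t 0 := hasDerivAt_mul_const t
  have hexp := ((c1.prodMk ((c2.add c1').prodMk (c3.prodMk c4))).prodMk c5)
  rw [hfun] at hΦw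
  exact hΦw.unique hexp

end Stmt8Aux


/-- Robustness of simple double roots in matrix formulation: the kernel vector,
generalized kernel vector, critical speed and critical decay rate of the symbol
`A(ν, c, μ) = Σ_{j=1}^{2m} ν^j P_j + cν M + F(μ)` at a simple double root continue
smoothly in the parameter `μ`, with normalization conditions
`⟨u₀(μ) − u₀⁰, u₀⁰⟩ = ⟨u₁(μ) − u₁⁰, u₀⁰⟩ = 0`. -/
theorem stmt8 (n m : ℕ) (hn : 1 ≤ n) (hm : 1 ≤ m)
    (P : ℕ → Matrix (Fin n) (Fin n) ℝ) (M : Matrix (Fin n) (Fin n) ℝ)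
    (F : ℝ → Matrix (Fin n) (Fin n) ℝ)
    (hF : ∀ i j : Fin n, ContDiff ℝ (⊤ : ℕ∞) (fun μ : ℝ => F μ i j))
    (A : ℝ → ℝ → ℝ → Matrix (Fin n) (Fin n) ℝ)
    (hA : ∀ ν c μ : ℝ,
      A ν c μ = ∑ j ∈ Finset.Icc 1 (2 * m), ν ^ j • P j + (c * ν) • M + F μ)
    (Aν : ℝ → ℝ → ℝ → Matrix (Fin n) (Fin n) ℝ)
    (hAν : ∀ (ν c μ : ℝ) (i j : Fin n),
      Aν ν c μ i j = deriv (fun ν' : ℝ => A ν' c μ i j) ν)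
    (Aνν : ℝ → ℝ → ℝ → Matrix (Fin n) (Fin n) ℝ)
    (hAνν : ∀ (ν c μ : ℝ) (i j : Fin n),
      Aνν ν c μ i j = iteratedDeriv 2 (fun ν' : ℝ => A ν' c μ i j) ν)
    (ν₀ c₀ : ℝ) (hν₀ : ν₀ ≠ 0) (u₀0 u₁0 : Fin n → ℝ)
    (h1 : (A ν₀ c₀ 0) *ᵥ u₀0 = 0)
    (h2 : (Aν ν₀ c₀ 0) *ᵥ u₀0 + (A ν₀ c₀ 0) *ᵥ u₁0 = 0)
    (h3 : u₀0 ≠ 0)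
    (h3' : LinearMap.ker (A ν₀ c₀ 0).mulVecLin = Submodule.span ℝ {u₀0})
    (h4 : M *ᵥ u₀0 ∉ LinearMap.range (A ν₀ c₀ 0).mulVecLin)
    (h5 : (1/2 : ℝ) • ((Aνν ν₀ c₀ 0) *ᵥ u₀0) + (Aν ν₀ c₀ 0) *ᵥ u₁0 ∉
      LinearMap.range (A ν₀ c₀ 0).mulVecLin) :
    ∃ ε : ℝ, 0 < ε ∧ ∃ u₀ u₁ : ℝ → Fin n → ℝ, ∃ c ν : ℝ → ℝ,
      ContDiffOn ℝ (⊤ : ℕ∞) u₀ (Set.Ioo (-ε) ε) ∧ ContDiffOn ℝ (⊤ : ℕ∞) u₁ (Set.Ioo (-ε) ε) ∧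
      ContDiffOn ℝ (⊤ : ℕ∞) c (Set.Ioo (-ε) ε) ∧ ContDiffOn ℝ (⊤ : ℕ∞) ν (Set.Ioo (-ε) ε) ∧
      u₀ 0 = u₀0 ∧ u₁ 0 = u₁0 ∧ c 0 = c₀ ∧ ν 0 = ν₀ ∧
      ∀ μ ∈ Set.Ioo (-ε) ε,
        (A (ν μ) (c μ) μ) *ᵥ (u₀ μ) = 0 ∧
        (Aν (ν μ) (c μ) μ) *ᵥ (u₀ μ) + (A (ν μ) (c μ) μ) *ᵥ (u₁ μ) = 0 ∧
        (u₀ μ - u₀0) ⬝ᵥ u₀0 = 0 ∧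
        (u₁ μ - u₁0) ⬝ᵥ u₀0 = 0 := by
  classical
  -- identify `A`, `Aν`, `Aνν` with the explicit symbols
  have hAB : ∀ ν c μ : ℝ, A ν c μ = stmt8Bm n m P M F ν c μ := fun ν c μ => hA ν c μ
  have hAνB : ∀ ν c μ : ℝ, Aν ν c μ = stmt8Bn n m P M ν c := by
    intro ν c μ
    ext i k
    rw [hAν]
    have : (fun ν' : ℝ => A ν' c μ i k) = fun ν' : ℝ => stmt8Bm n m P M F ν' c μ i k := by
      funext ν'; rw [hAB]
    rw [this]
    exact (stmt8_hasDerivAt_nu c μ i k ν).deriv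
  have hAννB : ∀ ν c μ : ℝ, Aνν ν c μ = stmt8Bnn n m P ν := by
    intro ν c μ
    ext i k
    rw [hAνν]
    have hfe : (fun ν' : ℝ => A ν' c μ i k) = fun ν' : ℝ => stmt8Bm n m P M F ν' c μ i k := by
      funext ν'; rw [hAB]
    rw [hfe, iteratedDeriv_succ, iteratedDeriv_one]
    have hd1 : (deriv fun ν' : ℝ => stmt8Bm n m P M F ν' c μ i k) =
        fun ν' : ℝ => stmt8Bn n m P M ν' c i k := by
      funext ν'; exact (stmt8_hasDerivAt_nu c μ i k ν').deriv
    rw [hd1]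
    exact (stmt8_hasDerivAt_nunu c i k ν).deriv
  -- translated hypotheses
  rw [hAB] at h1 h3' h4
  rw [hAB, hAνB] at h2
  rw [hAB, hAνB, hAννB] at h5
  set Φ : stmt8X n → stmt8X n := stmt8Phi n m P M F u₀0 u₁0 with hΦdef
  set a₀ : stmt8X n := ((u₀0, (u₁0, (c₀, ν₀))), (0 : ℝ)) with ha₀def
  have hΦ : ContDiff ℝ (⊤ : ℕ∞) Φ := stmt8_contDiff_Phi hF
  have hdiff : Differentiable ℝ Φ := hΦ.differentiable (by simp)
  -- injectivity of the derivative at the base point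
  have hinj : ∀ w : stmt8X n, fderiv ℝ Φ a₀ w = 0 → w = 0 := by
    rintro ⟨⟨v₀, v₁, γ, δ⟩, t⟩ hw
    rw [hΦdef, ha₀def, stmt8_fderiv_apply hF] at hw
    rw [show (0 : stmt8X n) = ((0, (0, (0, 0))), (0 : ℝ)) from rfl] at hw
    simp only [Prod.mk.injEq] at hw
    obtain ⟨⟨e1, e2, e3, e4⟩, e5⟩ := hw
    subst e5
    simp only [zero_smul, add_zero, Matrix.add_mulVec, Matrix.smul_mulVec] at e1 e2
    -- e1 : δ • (Bn *ᵥ u₀0) + (γ * ν₀) • (M *ᵥ u₀0) + Bm *ᵥ v₀ = 0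
    have hA0u1 : stmt8Bm n m P M F ν₀ c₀ 0 *ᵥ u₁0 = -(stmt8Bn n m P M ν₀ c₀ *ᵥ u₀0) := by
      linear_combination (norm := module) h2
    have hγ : γ = 0 := by
      by_contra hγ0
      have hne : γ * ν₀ ≠ 0 := mul_ne_zero hγ0 hν₀
      have hmem : (γ * ν₀) • (M *ᵥ u₀0) ∈
          LinearMap.range (stmt8Bm n m P M F ν₀ c₀ 0).mulVecLin := by
        refine ⟨δ • u₁0 - v₀, ?_⟩
        rw [Matrix.mulVecLin_apply, Matrix.mulVec_sub, Matrix.mulVec_smul, hA0u1]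
        linear_combination (norm := module) -e1
      exact h4 (by
        have := Submodule.smul_mem _ (γ * ν₀)⁻¹ hmem
        rwa [inv_smul_smul₀ hne] at this)
    subst hγ
    simp only [zero_smul, zero_mul, add_zero, zero_add, Matrix.zero_mulVec] at e1 e2
    -- v₀ - δ • u₁0 ∈ ker
    have hker1 : v₀ - δ • u₁0 ∈ LinearMap.ker (stmt8Bm n m P M F ν₀ c₀ 0).mulVecLin := by
      rw [LinearMap.mem_ker, Matrix.mulVecLin_apply, Matrix.mulVec_sub, Matrix.mulVec_smul,
        hA0u1]
      linear_combination (norm := module) e1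
    rw [h3', Submodule.mem_span_singleton] at hker1
    obtain ⟨α, hα⟩ := hker1
    have hv₀ : v₀ = α • u₀0 + δ • u₁0 := by linear_combination (norm := module) -hα
    have hδ : δ = 0 := by
      by_contra hδ0
      have hmem5 : (2 * δ) • ((1/2 : ℝ) • (stmt8Bnn n m P ν₀ *ᵥ u₀0)
          + stmt8Bn n m P M ν₀ c₀ *ᵥ u₁0) ∈
          LinearMap.range (stmt8Bm n m P M F ν₀ c₀ 0).mulVecLin := by
        refine ⟨α • u₁0 - v₁, ?_⟩
        rw [Matrix.mulVecLin_apply, Matrix.mulVec_sub, Matrix.mulVec_smul, hA0u1]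
        have hBnv₀ : stmt8Bn n m P M ν₀ c₀ *ᵥ v₀ =
            α • (stmt8Bn n m P M ν₀ c₀ *ᵥ u₀0) + δ • (stmt8Bn n m P M ν₀ c₀ *ᵥ u₁0) := by
          rw [hv₀, Matrix.mulVec_add, Matrix.mulVec_smul, Matrix.mulVec_smul]
        linear_combination (norm := module) -e2 + hBnv₀
      have := Submodule.smul_mem _ (2 * δ)⁻¹ hmem5
      rw [inv_smul_smul₀ (mul_ne_zero two_ne_zero hδ0)] at this
      exact h5 this
    subst hδ
    simp only [zero_smul, add_zero] at hv₀ e2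
    have hBnv₀ : stmt8Bn n m P M ν₀ c₀ *ᵥ v₀ = α • (stmt8Bn n m P M ν₀ c₀ *ᵥ u₀0) := by
      rw [hv₀, Matrix.mulVec_smul]
    have hker2 : v₁ - α • u₁0 ∈ LinearMap.ker (stmt8Bm n m P M F ν₀ c₀ 0).mulVecLin := by
      rw [LinearMap.mem_ker, Matrix.mulVecLin_apply, Matrix.mulVec_sub, Matrix.mulVec_smul,
        hA0u1]
      linear_combination (norm := module) e2 - hBnv₀
    rw [h3', Submodule.mem_span_singleton] at hker2
    obtain ⟨β, hβ⟩ := hker2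
    have hdot : u₀0 ⬝ᵥ u₀0 ≠ 0 := fun h => h3 (dotProduct_self_eq_zero.1 h)
    have hα0 : α = 0 := by
      rw [hv₀] at e3
      rw [smul_dotProduct] at e3
      rcases mul_eq_zero.1 e3 with h | h
      · exact h
      · exact absurd h hdot
    subst hα0
    simp only [zero_smul, sub_zero] at hβ hv₀
    have hβ0 : β = 0 := by
      rw [← hβ, smul_dotProduct] at e4
      rcases mul_eq_zero.1 e4 with h | h
      · exact h
      · exact absurd h hdot
    have hv₁ : v₁ = 0 := by rw [← hβ, hβ0, zero_smul]
    refine Prod.ext (Prod.ext ?_ (Prod.ext ?_ (Prod.ext rfl rfl))) rfl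
    · simpa using hv₀
    · simpa using hv₁
  -- the derivative at the base point has nonzero determinant
  have hdet : LinearMap.det ((fderiv ℝ Φ a₀ : stmt8X n →L[ℝ] stmt8X n) :
      stmt8X n →ₗ[ℝ] stmt8X n) ≠ 0 := by
    intro h
    have hlt := LinearMap.bot_lt_ker_of_det_eq_zero h
    obtain ⟨w, hwmem, hwne⟩ := (Submodule.ne_bot_iff _).1 (ne_of_gt hlt)
    exact hwne (hinj w hwmem)
  -- the set where the derivative of Φ is invertible
  set S : Set (stmt8X n) := {x | LinearMap.det ((fderiv ℝ Φ x : stmt8X n →L[ℝ] stmt8X n) :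
      stmt8X n →ₗ[ℝ] stmt8X n) ≠ 0} with hSdef
  have hScont : Continuous fun x : stmt8X n =>
      LinearMap.det ((fderiv ℝ Φ x : stmt8X n →L[ℝ] stmt8X n) : stmt8X n →ₗ[ℝ] stmt8X n) :=
    ContinuousLinearMap.continuous_det.comp (hΦ.continuous_fderiv (by simp))
  have hSopen : IsOpen S := isOpen_compl_singleton.preimage hScont
  have ha₀S : a₀ ∈ S := hdet
  -- continuous linear equivalences at points of S
  have hfd : ∀ x ∈ S, ∃ e : stmt8X n ≃L[ℝ] stmt8X n, HasFDerivAt Φ (e : stmt8X n →L[ℝ] stmt8X n) x := by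
    intro x hx
    refine ⟨(LinearMap.equivOfDetNeZero
      ((fderiv ℝ Φ x : stmt8X n →L[ℝ] stmt8X n) : stmt8X n →ₗ[ℝ] stmt8X n)
      hx).toContinuousLinearEquiv, ?_⟩
    have hcoe : (((LinearMap.equivOfDetNeZero
        ((fderiv ℝ Φ x : stmt8X n →L[ℝ] stmt8X n) : stmt8X n →ₗ[ℝ] stmt8X n)
        hx).toContinuousLinearEquiv : stmt8X n ≃L[ℝ] stmt8X n) : stmt8X n →L[ℝ] stmt8X n) =
        fderiv ℝ Φ x := by
      refine ContinuousLinearMap.ext fun w => ?_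
      have : ((LinearMap.equivOfDetNeZero
          ((fderiv ℝ Φ x : stmt8X n →L[ℝ] stmt8X n) : stmt8X n →ₗ[ℝ] stmt8X n)
          hx).toContinuousLinearEquiv : stmt8X n →L[ℝ] stmt8X n) w =
          (LinearMap.equivOfDetNeZero
          ((fderiv ℝ Φ x : stmt8X n →L[ℝ] stmt8X n) : stmt8X n →ₗ[ℝ] stmt8X n) hx) w := by
        simp [LinearEquiv.coe_toContinuousLinearEquiv']
      rw [this, LinearEquiv.ofIsUnitDet_apply]
      rfl
    rw [hcoe]
    exact (hdiff x).hasFDerivAt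
  obtain ⟨e₀, he₀⟩ := hfd a₀ ha₀S
  have hone : ((⊤ : ℕ∞) : WithTop ℕ∞) ≠ 0 := by simp
  have hfa₀ : ContDiffAt ℝ (⊤ : ℕ∞) Φ a₀ := hΦ.contDiffAt
  set f : OpenPartialHomeomorph (stmt8X n) (stmt8X n) :=
    hfa₀.toOpenPartialHomeomorph Φ he₀ hone with hfdef
  have hcoe_f : ⇑f = Φ := ContDiffAt.toOpenPartialHomeomorph_coe hfa₀ he₀ hone
  have hsrc : a₀ ∈ f.source := ContDiffAt.mem_toOpenPartialHomeomorph_source hfa₀ he₀ hone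
  have htgt : Φ a₀ ∈ f.target := ContDiffAt.image_mem_toOpenPartialHomeomorph_target hfa₀ he₀ hone
  -- the base point is sent to zero
  have hΦa₀ : Φ a₀ = ((((0 : Fin n → ℝ), ((0 : Fin n → ℝ), ((0 : ℝ), (0 : ℝ))))), (0 : ℝ)) := by
    rw [hΦdef, ha₀def]
    simp only [stmt8Phi]
    refine Prod.ext (Prod.ext ?_ (Prod.ext ?_ (Prod.ext ?_ ?_))) rfl
    · exact h1
    · exact h2
    · simp
    · simp
  set q : ℝ → stmt8X n :=
    fun μ => ((((0 : Fin n → ℝ), ((0 : Fin n → ℝ), ((0 : ℝ), (0 : ℝ))))), μ) with hqdef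
  have hq0 : q 0 = Φ a₀ := by rw [hΦa₀]
  have hqc : Continuous q := continuous_const.prodMk continuous_id
  set W : Set ℝ := q ⁻¹' f.target with hWdef
  have hWopen : IsOpen W := f.open_target.preimage hqc
  have h0W : (0 : ℝ) ∈ W := by
    show q 0 ∈ f.target
    rw [hq0]; exact htgt
  have hgq : ContinuousOn (fun μ => f.symm (q μ)) W :=
    f.continuousOn_symm.comp hqc.continuousOn (fun μ hμ => hμ)
  set V : Set ℝ := W ∩ (fun μ => f.symm (q μ)) ⁻¹' S with hVdef
  have hVopen : IsOpen V := hgq.isOpen_inter_preimage hWopen hSopen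
  have hx0 : f.symm (q 0) = a₀ := by
    rw [hq0, ← hcoe_f]
    exact f.left_inv hsrc
  have h0V : (0 : ℝ) ∈ V := by
    refine ⟨h0W, ?_⟩
    show f.symm (q 0) ∈ S
    rw [hx0]; exact ha₀S
  obtain ⟨ε, hεpos, hball⟩ := Metric.isOpen_iff.1 hVopen 0 h0V
  have hIoo : Set.Ioo (-ε) ε ⊆ V := by
    intro μ hμ
    apply hball
    rw [Real.ball_eq_Ioo]
    simpa using hμ
  -- the smooth family
  set xf : ℝ → stmt8X n := fun μ => f.symm (q μ) with hxfdef
  have hxCD : ∀ μ ∈ Set.Ioo (-ε) ε, ContDiffAt ℝ (⊤ : ℕ∞) xf μ := by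
    intro μ hμ
    obtain ⟨hμW, hμS⟩ := hIoo hμ
    obtain ⟨e, he⟩ := hfd (f.symm (q μ)) hμS
    have hsymmCD : ContDiffAt ℝ (⊤ : ℕ∞) f.symm (q μ) := by
      refine f.contDiffAt_symm (f₀' := e) hμW ?_ ?_
      · rw [hcoe_f]; exact he
      · rw [hcoe_f]; exact hΦ.contDiffAt
    have hqCD : ContDiffAt ℝ (⊤ : ℕ∞) q μ := (contDiff_const.prodMk contDiff_id).contDiffAt
    exact hsymmCD.comp μ hqCD
  refine ⟨ε, hεpos, fun μ => (xf μ).1.1, fun μ => (xf μ).1.2.1,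
    fun μ => (xf μ).1.2.2.1, fun μ => (xf μ).1.2.2.2, ?_, ?_, ?_, ?_, ?_, ?_, ?_, ?_, ?_⟩
  · intro μ hμ
    exact (((contDiff_fst.comp contDiff_fst).contDiffAt).comp μ (hxCD μ hμ)).contDiffWithinAt
  · intro μ hμ
    exact (((contDiff_fst.comp (contDiff_snd.comp contDiff_fst)).contDiffAt).comp μ
      (hxCD μ hμ)).contDiffWithinAt
  · intro μ hμ
    exact (((contDiff_fst.comp (contDiff_snd.comp (contDiff_snd.comp
      contDiff_fst))).contDiffAt).comp μ (hxCD μ hμ)).contDiffWithinAt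
  · intro μ hμ
    exact (((contDiff_snd.comp (contDiff_snd.comp (contDiff_snd.comp
      contDiff_fst))).contDiffAt).comp μ (hxCD μ hμ)).contDiffWithinAt
  · show (xf 0).1.1 = u₀0
    rw [hxfdef]; simp only; rw [hx0, ha₀def]
  · show (xf 0).1.2.1 = u₁0
    rw [hxfdef]; simp only; rw [hx0, ha₀def]
  · show (xf 0).1.2.2.1 = c₀
    rw [hxfdef]; simp only; rw [hx0, ha₀def]
  · show (xf 0).1.2.2.2 = ν₀
    rw [hxfdef]; simp only; rw [hx0, ha₀def]
  · intro μ hμ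
    obtain ⟨hμW, hμS⟩ := hIoo hμ
    have hri : Φ (xf μ) = q μ := by
      rw [hxfdef]
      simp only
      rw [← hcoe_f]
      exact f.right_inv hμW
    have hμeq : (xf μ).2 = μ := congrArg Prod.snd hri
    have hc1 : stmt8Bm n m P M F (xf μ).1.2.2.2 (xf μ).1.2.2.1 (xf μ).2 *ᵥ (xf μ).1.1 = 0 :=
      congrArg (fun z : stmt8X n => z.1.1) hri
    have hc2 : stmt8Bn n m P M (xf μ).1.2.2.2 (xf μ).1.2.2.1 *ᵥ (xf μ).1.1
        + stmt8Bm n m P M F (xf μ).1.2.2.2 (xf μ).1.2.2.1 (xf μ).2 *ᵥ (xf μ).1.2.1 = 0 :=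
      congrArg (fun z : stmt8X n => z.1.2.1) hri
    have hc3 : ((xf μ).1.1 - u₀0) ⬝ᵥ u₀0 = 0 :=
      congrArg (fun z : stmt8X n => z.1.2.2.1) hri
    have hc4 : ((xf μ).1.2.1 - u₁0) ⬝ᵥ u₀0 = 0 :=
      congrArg (fun z : stmt8X n => z.1.2.2.2) hri
    rw [hμeq] at hc1 hc2
    refine ⟨?_, ?_, hc3, hc4⟩
    · rw [hAB]; exact hc1
    · rw [hAB, hAνB]; exact hc2
end

section
/- Let n ≥ 1, let A⁰, A¹, A², M be n×n real matrices, let u₀, u₁ ∈ ℝⁿ and ν₀ ∈ ℝ with ν₀ ≠ 0. Assume: ker A⁰ is one-dimensional, spanned by u₀ ≠ 0; A¹u₀ + A⁰u₁ = 0; Mu₀ ∉ range A⁰; and A²u₀ + A¹u₁ ∉ range A⁰. Then the linear map T : ℝⁿ × ℝⁿ × ℝ × ℝ → ℝⁿ × ℝⁿ × ℝ × ℝ defined by T(w₀, w₁, c̃, ν̃) = (A⁰w₀ + c̃ν₀Mu₀ − ν̃A⁰u₁, A¹w₀ + A⁰w₁ + c̃(Mu₀ + ν₀Mu₁) + ν̃(2A²u₀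 + A¹u₁), ⟨w₀, u₀⟩, ⟨w₁, u₀⟩) is injective, and hence bijective. -/
/-!
A kernel vector `(w₀, w₁, c̃, ν̃)` of `T` is peeled off one coordinate at a time. The first
component puts `c̃ν₀ Mu₀` in `range A⁰`, so `c̃ = 0`; then `w₀ - ν̃u₁ ∈ ker A⁰`, say
`w₀ = ν̃u₁ + αu₀`. Substituting this and the chain relation `A¹u₀ = -A⁰u₁` into the second
component puts `2ν̃(A²u₀ + A¹u₁)` in `range A⁰`, so `ν̃ = 0`. Now `w₀` and then `w₁` lie in
`ker A⁰ = span {u₀}` and are orthogonal to `u₀`, hence vanish. Injectivity of an endomorphism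
of a finite-dimensional space gives bijectivity.
-/

open Matrix

theorem eq_zero_of_smul_mem_of_notMem {K V : Type*} [Field K] [AddCommGroup V] [Module K V]
    {p : Submodule K V} {v : V} (hv : v ∉ p) {c : K} (h : c • v ∈ p) : c = 0 := by
  by_contra hc
  exact hv ((p.smul_mem_iff hc).mp h)

section

variable {ι K : Type*} [Fintype ι] [Field K] [LinearOrder K] [IsStrictOrderedRing K]

theorem eq_zero_of_mem_span_singleton_of_dotProduct_eq_zero {u w : ι → K}
    (hw : w ∈ Submodule.span K {u}) (h : w ⬝ᵥ u = 0) : w = 0 := by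
  obtain ⟨a, rfl⟩ := Submodule.mem_span_singleton.mp hw
  rw [smul_dotProduct, smul_eq_mul, mul_eq_zero, dotProduct_self_eq_zero] at h
  rcases h with rfl | rfl <;> simp

variable (A0 A1 A2 M : Matrix ι ι K) (u₀ u₁ : ι → K) (ν₀ : K)

def doubleRootLinearization :
    ((ι → K) × (ι → K) × K × K) →ₗ[K] ((ι → K) × (ι → K) × K × K) where
  toFun p :=
    (A0 *ᵥ p.1 + (p.2.2.1 * ν₀) • (M *ᵥ u₀) - p.2.2.2 • (A0 *ᵥ u₁),
     A1 *ᵥ p.1 + A0 *ᵥ p.2.1 + p.2.2.1 • (M *ᵥ u₀ + ν₀ • (M *ᵥ u₁))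
       + p.2.2.2 • ((2 : K) • (A2 *ᵥ u₀) + A1 *ᵥ u₁),
     p.1 ⬝ᵥ u₀, p.2.1 ⬝ᵥ u₀)
  map_add' p q := by
    simp only [Prod.fst_add, Prod.snd_add, mulVec_add, add_dotProduct, Prod.mk_add_mk,
      Prod.mk.injEq]
    exact ⟨by module, by module, trivial⟩
  map_smul' r p := by
    simp only [Prod.smul_fst, Prod.smul_snd, mulVec_smul, smul_dotProduct, smul_eq_mul,
      RingHom.id_apply, Prod.smul_mk, Prod.mk.injEq]
    exact ⟨by module, by module, trivial⟩

theorem doubleRootLinearization_injective (hν₀ : ν₀ ≠ 0)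
    (hker : LinearMap.ker A0.mulVecLin = Submodule.span K {u₀})
    (hchain : A1 *ᵥ u₀ + A0 *ᵥ u₁ = 0)
    (hM : M *ᵥ u₀ ∉ LinearMap.range A0.mulVecLin)
    (hA2 : A2 *ᵥ u₀ + A1 *ᵥ u₁ ∉ LinearMap.range A0.mulVecLin) :
    Function.Injective (doubleRootLinearization A0 A1 A2 M u₀ u₁ ν₀) := by
  rw [← LinearMap.ker_eq_bot, LinearMap.ker_eq_bot']
  rintro ⟨w₀, w₁, c, ν⟩ hT
  simp only [doubleRootLinearization, LinearMap.coe_mk, AddHom.coe_mk, Prod.mk_eq_zero] at hT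
  obtain ⟨h₁, h₂, h₃, h₄⟩ := hT
  obtain rfl : c = 0 := by
    refine (mul_eq_zero.mp (eq_zero_of_smul_mem_of_notMem hM ⟨ν • u₁ - w₀, ?_⟩)).resolve_right hν₀
    simp only [mulVecLin_apply, mulVec_sub, mulVec_smul]
    linear_combination (norm := module) -h₁
  simp only [zero_mul, zero_smul, add_zero] at h₁ h₂
  have mem_span : ∀ w, A0 *ᵥ w = 0 → w ∈ Submodule.span K {u₀} := fun w hw => by
    rwa [← hker, LinearMap.mem_ker, mulVecLin_apply]
  obtain rfl : ν = 0 := by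
    obtain ⟨α, hα⟩ := Submodule.mem_span_singleton.mp <| mem_span (w₀ - ν • u₁) <| by
      rw [mulVec_sub, mulVec_smul]
      linear_combination (norm := module) h₁
    have hA1w₀ : A1 *ᵥ w₀ = ν • A1 *ᵥ u₁ - α • A0 *ᵥ u₁ := by
      have h := congrArg (A1 *ᵥ ·) hα
      simp only [mulVec_smul, mulVec_sub] at h
      linear_combination (norm := module) -h + α • hchain
    refine (mul_eq_zero.mp (eq_zero_of_smul_mem_of_notMem hA2 ⟨α • u₁ - w₁, ?_⟩)).resolve_left
      two_ne_zero
    rw [mulVecLin_apply, mulVec_sub, mulVec_smul]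
    linear_combination (norm := module) -h₂ + hA1w₀
  simp only [zero_smul, sub_zero, add_zero] at h₁ h₂
  obtain rfl := eq_zero_of_mem_span_singleton_of_dotProduct_eq_zero (mem_span w₀ h₁) h₃
  rw [mulVec_zero, zero_add] at h₂
  obtain rfl := eq_zero_of_mem_span_singleton_of_dotProduct_eq_zero (mem_span w₁ h₂) h₄
  rfl

end

theorem stmt9_general (n : ℕ)
    (A0 A1 A2 M : Matrix (Fin n) (Fin n) ℝ)
    (u₀ u₁ : Fin n → ℝ) (ν₀ : ℝ) (hν₀ : ν₀ ≠ 0)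
    (hker : LinearMap.ker A0.mulVecLin = Submodule.span ℝ {u₀})
    (hchain : A1 *ᵥ u₀ + A0 *ᵥ u₁ = 0)
    (hM : M *ᵥ u₀ ∉ LinearMap.range A0.mulVecLin)
    (hA2 : A2 *ᵥ u₀ + A1 *ᵥ u₁ ∉ LinearMap.range A0.mulVecLin)
    (T : (Fin n → ℝ) × (Fin n → ℝ) × ℝ × ℝ → (Fin n → ℝ) × (Fin n → ℝ) × ℝ × ℝ)
    (hT : ∀ (w₀ w₁ : Fin n → ℝ) (ct νt : ℝ), T (w₀, w₁, ct, νt) =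
      (A0 *ᵥ w₀ + (ct * ν₀) • (M *ᵥ u₀) - νt • (A0 *ᵥ u₁),
       A1 *ᵥ w₀ + A0 *ᵥ w₁ + ct • (M *ᵥ u₀ + ν₀ • (M *ᵥ u₁))
         + νt • ((2 : ℝ) • (A2 *ᵥ u₀) + A1 *ᵥ u₁),
       w₀ ⬝ᵥ u₀, w₁ ⬝ᵥ u₀)) :
    Function.Injective T ∧ Function.Bijective T := by
  obtain rfl : T = doubleRootLinearization A0 A1 A2 M u₀ u₁ ν₀ :=
    funext fun ⟨w₀, w₁, ct, νt⟩ => hT w₀ w₁ ct νt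
  have hinj := doubleRootLinearization_injective A0 A1 A2 M u₀ u₁ ν₀ hν₀ hker hchain hM hA2
  exact ⟨hinj, hinj, LinearMap.surjective_of_injective hinj⟩

/-- Invertibility of the linearization of the double-root defining system: under the
simple-double-root hypotheses, the linear map
`T(w₀, w₁, c̃, ν̃) = (A⁰w₀ + c̃ν₀Mu₀ − ν̃A⁰u₁,
A¹w₀ + A⁰w₁ + c̃(Mu₀ + ν₀Mu₁) + ν̃(2A²u₀ + A¹u₁), ⟨w₀, u₀⟩, ⟨w₁, u₀⟩)`
is injective, hence bijective. -/
theorem stmt9 (n : ℕ) (hn : 1 ≤ n)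
    (A0 A1 A2 M : Matrix (Fin n) (Fin n) ℝ)
    (u₀ u₁ : Fin n → ℝ) (ν₀ : ℝ) (hν₀ : ν₀ ≠ 0)
    (hu₀ : u₀ ≠ 0)
    (hker : LinearMap.ker A0.mulVecLin = Submodule.span ℝ {u₀})
    (hchain : A1 *ᵥ u₀ + A0 *ᵥ u₁ = 0)
    (hM : M *ᵥ u₀ ∉ LinearMap.range A0.mulVecLin)
    (hA2 : A2 *ᵥ u₀ + A1 *ᵥ u₁ ∉ LinearMap.range A0.mulVecLin)
    (T : (Fin n → ℝ) × (Fin n → ℝ) × ℝ × ℝ → (Fin n → ℝ) × (Fin n → ℝ) × ℝ × ℝ)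
    (hT : ∀ (w₀ w₁ : Fin n → ℝ) (ct νt : ℝ), T (w₀, w₁, ct, νt) =
      (A0 *ᵥ w₀ + (ct * ν₀) • (M *ᵥ u₀) - νt • (A0 *ᵥ u₁),
       A1 *ᵥ w₀ + A0 *ᵥ w₁ + ct • (M *ᵥ u₀ + ν₀ • (M *ᵥ u₁))
         + νt • ((2 : ℝ) • (A2 *ᵥ u₀) + A1 *ᵥ u₁),
       w₀ ⬝ᵥ u₀, w₁ ⬝ᵥ u₀)) :
    Function.Injective T ∧ Function.Bijective T :=
  stmt9_general n A0 A1 A2 M u₀ u₁ ν₀ hν₀ hker hchain hM hA2 T hT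
end

section
/- Let A⁰, A¹ be n×n real matrices and u₀ ∈ ℝⁿ with ⟨u₀, u₀⟩ = 1, such that ker A⁰ is one-dimensional and spanned by u₀, and let u₁ ∈ ℝⁿ satisfy A¹u₀ + A⁰u₁ = 0. Then the kernel of the linear map S : ℝⁿ × ℝ → ℝⁿ × ℝ, S(u, ν) = (A⁰u + νA¹u₀, 2⟨u, u₀⟩), is one-dimensional and is spanned by the vector (u₁ − ⟨u₁, u₀⟩u₀, 1). -/
/-!
By the chain relation `A¹u₀ = -A⁰u₁`, `S (u, ν) = 0` says exactly that `u - νu₁ ∈ ker A⁰ = ℝu₀`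
and `u ⊥ u₀`. Writing `u - νu₁ = c u₀` and pairing with the unit vector `u₀` forces
`c = -ν⟨u₁, u₀⟩`, so `u = ν (u₁ - ⟨u₁, u₀⟩u₀)`.
-/

open Matrix

section DotProduct

variable {R m : Type*} [CommRing R]

theorem mulVec_add_smul_mulVec_eq_mulVec_sub_smul {n : Type*} [Fintype n]
    {A₀ A₁ : Matrix m n R} {u₀ u₁ : n → R} (hchain : A₁ *ᵥ u₀ + A₀ *ᵥ u₁ = 0)
    (u : n → R) (ν : R) :
    A₀ *ᵥ u + ν • (A₁ *ᵥ u₀) = A₀ *ᵥ (u - ν • u₁) := by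
  rw [eq_neg_of_add_eq_zero_left hchain, mulVec_sub, mulVec_smul]
  module

theorem sub_smul_mem_span_and_dotProduct_eq_zero_iff [Fintype m] {u₀ v w : m → R}
    (hnorm : u₀ ⬝ᵥ u₀ = 1) (ν : R) :
    v - ν • w ∈ Submodule.span R {u₀} ∧ v ⬝ᵥ u₀ = 0 ↔ v = ν • (w - (w ⬝ᵥ u₀) • u₀) := by
  constructor
  · rintro ⟨hmem, horth⟩
    obtain ⟨c, hc⟩ := Submodule.mem_span_singleton.mp hmem
    have hcoeff : c = -(ν * (w ⬝ᵥ u₀)) := by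
      have := congrArg (· ⬝ᵥ u₀) hc
      simp only [smul_dotProduct, sub_dotProduct, hnorm, horth, smul_eq_mul] at this
      linear_combination this
    rw [hcoeff] at hc
    linear_combination (norm := module) -hc
  · rintro rfl
    refine ⟨Submodule.mem_span_singleton.mpr ⟨-(ν * (w ⬝ᵥ u₀)), by module⟩, ?_⟩
    simp only [smul_dotProduct, sub_dotProduct, hnorm, smul_eq_mul]
    ring

end DotProduct

/-- Kernel of the linearization of the bordered eigenvalue problem at a simple double
root: the kernel of `S(u, ν) = (A⁰u + νA¹u₀, 2⟨u, u₀⟩)` is one-dimensional, spanned by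
`(u₁ − ⟨u₁, u₀⟩u₀, 1)`. -/
theorem stmt10 (n : ℕ) (A0 A1 : Matrix (Fin n) (Fin n) ℝ)
    (u₀ : Fin n → ℝ) (hnorm : u₀ ⬝ᵥ u₀ = 1)
    (hker : LinearMap.ker A0.mulVecLin = Submodule.span ℝ {u₀})
    (u₁ : Fin n → ℝ) (hchain : A1 *ᵥ u₀ + A0 *ᵥ u₁ = 0)
    (S : (Fin n → ℝ) × ℝ → (Fin n → ℝ) × ℝ)
    (hS : ∀ (u : Fin n → ℝ) (ν : ℝ),
      S (u, ν) = (A0 *ᵥ u + ν • (A1 *ᵥ u₀), 2 * (u ⬝ᵥ u₀))) :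
    {p : (Fin n → ℝ) × ℝ | S p = 0} =
      {p : (Fin n → ℝ) × ℝ | ∃ t : ℝ, p = t • (u₁ - (u₁ ⬝ᵥ u₀) • u₀, (1 : ℝ))} := by
  have hA0 (v : Fin n → ℝ) : A0 *ᵥ v = 0 ↔ v ∈ Submodule.span ℝ {u₀} := by
    rw [← hker, LinearMap.mem_ker, mulVecLin_apply]
  ext ⟨u, ν⟩
  simp only [Set.mem_ofPred_eq, hS, Prod.ext_iff, Prod.fst_zero, Prod.snd_zero, Prod.smul_mk,
    smul_eq_mul, mul_one, mulVec_add_smul_mulVec_eq_mulVec_sub_smul hchain, hA0,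
    mul_eq_zero, two_ne_zero, false_or, sub_smul_mem_span_and_dotProduct_eq_zero_iff hnorm]
  exact ⟨fun hu => ⟨ν, hu, rfl⟩, fun ⟨t, hu, hν⟩ => hν ▸ hu⟩
end

section
/- Let D : ℝ² → ℝ, (λ, ν) ↦ D(λ, ν), be smooth (C^∞), let ν₀ < 0, and suppose D(0, ν₀) = 0, ∂_νD(0, ν₀) = 0, a := ∂_λD(0, ν₀) ≠ 0, b := (1/2)∂²_{νν}D(0, ν₀), and a·b < 0 (so that a·ν₀/b > 0). Then there exist ε > 0 and smooth functions ν₊, ν₋ : (−ε, ε) → ℝ with ν₊(0) = ν₋(0) = ν₀, ν₊'(0) = √(a·ν₀/b), ν₋'(0) = −√(a·ν₀/b), such that D(−σ²·ν₊(σ), ν₊(σ)) = 0 and D(−σ²·ν₋(σ), ν₋(σ)) = 0 for all |σ| < ε. -/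
open Filter
open scoped ContDiff
set_option maxHeartbeats 4000000

section helpers
lemma sliceY (f : ℝ × ℝ → ℝ) {x₀ y₀ : ℝ} (hf : DifferentiableAt ℝ f (x₀, y₀)) :
    HasDerivAt (fun y => f (x₀, y)) (fderiv ℝ f (x₀, y₀) (0, 1)) y₀ :=
  hf.hasFDerivAt.comp_hasDerivAt y₀ (HasDerivAt.prodMk (hasDerivAt_const y₀ x₀) (hasDerivAt_id y₀))

lemma sliceX (f : ℝ × ℝ → ℝ) {x₀ y₀ : ℝ} (hf : DifferentiableAt ℝ f (x₀, y₀)) :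
    HasDerivAt (fun x => f (x, y₀)) (fderiv ℝ f (x₀, y₀) (1, 0)) x₀ :=
  hf.hasFDerivAt.comp_hasDerivAt x₀ (HasDerivAt.prodMk (hasDerivAt_id x₀) (hasDerivAt_const x₀ y₀))

lemma clm_decomp (L : ℝ × ℝ →L[ℝ] ℝ) (u v : ℝ) :
    L (u, v) = u * L (1, 0) + v * L (0, 1) := by
  have h : (u, v) = u • ((1:ℝ), (0:ℝ)) + v • ((0:ℝ), (1:ℝ)) := by simp [Prod.ext_iff]
  rw [h, map_add, L.map_smul, L.map_smul, smul_eq_mul, smul_eq_mul]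

end helpers

lemma param_contDiff {H : Type} [NormedAddCommGroup H] [NormedSpace ℝ H] [ProperSpace H]
    (n : ℕ) : ∀ {E : Type} [NormedAddCommGroup E] [NormedSpace ℝ E] [CompleteSpace E]
    (φ : ℝ × H → E), ContDiff ℝ ∞ φ → ContDiff ℝ n (fun x => ∫ t in (0:ℝ)..1, φ (t, x)) := by
  induction n with
  | zero =>
    intro E _ _ _ φ hφ
    refine contDiff_zero.2 ?_
    have hc : Continuous φ := hφ.continuous
    exact intervalIntegral.continuous_parametric_intervalIntegral_of_continuous'
      (f := fun x t => φ (t, x)) (hc.comp continuous_swap) 0 1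
  | succ n ih =>
    intro E _ _ _ φ hφ
    set φ' : ℝ × H → (H →L[ℝ] E) := fun p => (fderiv ℝ φ p).comp (ContinuousLinearMap.inr ℝ ℝ H)
      with hφ'def
    have hφ' : ContDiff ℝ ∞ φ' := (contDiff_infty_iff_fderiv.1 hφ).2.clm_comp contDiff_const
    have hder : ∀ x t, HasFDerivAt (fun y => φ (t, y)) (φ' (t, x)) x := by
      intro x t
      exact ((contDiff_infty_iff_fderiv.1 hφ).1 (t, x)).hasFDerivAt.comp x
        (hasFDerivAt_prodMk_right t x)
    have hc : Continuous φ := hφ.continuous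
    have hc' : Continuous φ' := hφ'.continuous
    have hD : ∀ x₀, HasFDerivAt (fun x => ∫ t in (0:ℝ)..1, φ (t, x))
        (∫ t in (0:ℝ)..1, φ' (t, x₀)) x₀ := by
      intro x₀
      obtain ⟨C, hC⟩ := (isCompact_Icc.prod (isCompact_closedBall x₀ 1)).exists_bound_of_continuousOn
        (f := φ') hc'.continuousOn
      refine intervalIntegral.hasFDerivAt_integral_of_dominated_of_fderiv_le
        (F' := fun x t => φ' (t, x)) (bound := fun _ => C)
        (Metric.closedBall_mem_nhds x₀ one_pos) ?_ ?_ ?_ ?_ ?_ ?_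
      · exact Eventually.of_forall fun x => (Continuous.aestronglyMeasurable (by fun_prop))
      · exact Continuous.intervalIntegrable (by fun_prop) _ _
      · exact Continuous.aestronglyMeasurable (by fun_prop)
      · refine Eventually.of_forall fun t ht x hx => hC _ ⟨?_, hx⟩
        rw [Set.uIoc_of_le zero_le_one] at ht
        exact ⟨ht.1.le, ht.2⟩
      · exact intervalIntegrable_const
      · exact Eventually.of_forall fun t _ x _ => hder x t
    have hfe : fderiv ℝ (fun x => ∫ t in (0:ℝ)..1, φ (t, x)) =
        fun x => ∫ t in (0:ℝ)..1, φ' (t, x) := funext fun x => (hD x).fderiv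
    rw [Nat.cast_succ, contDiff_succ_iff_fderiv]
    refine ⟨fun x => (hD x).differentiableAt, by simp, ?_⟩
    rw [hfe]
    exact ih φ' hφ'

lemma hadamard1 (f : ℝ → ℝ) (hf : ContDiff ℝ ∞ f) (c : ℝ) :
    ∃ g : ℝ → ℝ, ContDiff ℝ ∞ g ∧ g c = deriv f c ∧ ∀ x, f x = f c + (x - c) * g x := by
  obtain ⟨hfd, hdf⟩ := contDiff_infty_iff_deriv.1 hf
  have hdc : Continuous (deriv f) := hdf.continuous
  refine ⟨fun x => ∫ t in (0:ℝ)..1, deriv f (c + t * (x - c)), ?_, ?_, ?_⟩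
  · have hφ : ContDiff ℝ ∞ (fun q : ℝ × ℝ => deriv f (c + q.1 * (q.2 - c))) :=
      hdf.comp (by fun_prop)
    exact contDiff_infty.2 fun n => param_contDiff n _ hφ
  · simp
  · intro x
    have hderiv : ∀ t, HasDerivAt (fun t => f (c + t * (x - c)))
        ((x - c) * deriv f (c + t * (x - c))) t := by
      intro t
      have hc : HasDerivAt (fun t : ℝ => c + t * (x - c)) (1 * (x - c)) t :=
        ((hasDerivAt_id t).mul_const (x - c)).const_add c
      have := (hfd (c + t * (x - c))).hasDerivAt.comp t hc
      exact this.congr_deriv (by ring)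
    have hint := intervalIntegral.integral_eq_sub_of_hasDerivAt (fun t _ => hderiv t)
      (Continuous.intervalIntegrable (by fun_prop) 0 1)
    rw [intervalIntegral.integral_const_mul, show c + 1 * (x - c) = x by ring,
      show c + 0 * (x - c) = c by ring] at hint
    show f x = f c + (x - c) * ∫ t in (0:ℝ)..1, deriv f (c + t * (x - c))
    linarith

lemma hadamardL (Df : ℝ × ℝ → ℝ) (hD : ContDiff ℝ ∞ Df) :
    ∃ A : ℝ × ℝ → ℝ, ContDiff ℝ ∞ A ∧ (∀ ν, A (0, ν) = fderiv ℝ Df (0, ν) (1, 0)) ∧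
      ∀ l ν, Df (l, ν) = Df (0, ν) + l * A (l, ν) := by
  obtain ⟨hDd, hf⟩ := contDiff_infty_iff_fderiv.1 hD
  have hcf : Continuous (fderiv ℝ Df) := hf.continuous
  refine ⟨fun p => ∫ t in (0:ℝ)..1, fderiv ℝ Df (t * p.1, p.2) (1, 0), ?_, ?_, ?_⟩
  · have hφ : ContDiff ℝ ∞ (fun q : ℝ × (ℝ × ℝ) => fderiv ℝ Df (q.1 * q.2.1, q.2.2) (1, 0)) :=
      (hf.comp (by fun_prop)).clm_apply contDiff_const
    exact contDiff_infty.2 fun n => param_contDiff n _ hφ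
  · intro ν; simp
  · intro l ν
    have hderiv : ∀ t, HasDerivAt (fun t => Df (t * l, ν))
        (l * fderiv ℝ Df (t * l, ν) (1, 0)) t := by
      intro t
      have hc : HasDerivAt (fun t : ℝ => (t * l, ν)) (1 * l, (0:ℝ)) t :=
        ((hasDerivAt_id t).mul_const l).prodMk (hasDerivAt_const t ν)
      have := (hDd (t * l, ν)).hasFDerivAt.comp_hasDerivAt t hc
      exact this.congr_deriv (by rw [clm_decomp (fderiv ℝ Df (t * l, ν)) (1 * l) 0]; ring)
    have hint := intervalIntegral.integral_eq_sub_of_hasDerivAt (fun t _ => hderiv t)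
      (Continuous.intervalIntegrable (by fun_prop) 0 1)
    rw [intervalIntegral.integral_const_mul, show (1:ℝ) * l = l by ring,
      show (0:ℝ) * l = 0 by ring] at hint
    show Df (l, ν) = Df (0, ν) + l * ∫ t in (0:ℝ)..1, fderiv ℝ Df (t * l, ν) (1, 0)
    linarith

/-- Smooth implicit function theorem for `G : ℝ² → ℝ` solving for the second variable. -/
lemma ift2 (G : ℝ × ℝ → ℝ) (w₀ : ℝ) (hG : ContDiff ℝ ∞ G) (hG0 : G (0, w₀) = 0)
    (hd : deriv (fun w => G (0, w)) w₀ ≠ 0) :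
    ∃ w : ℝ → ℝ, w 0 = w₀ ∧ (∀ᶠ σ in nhds 0, ContDiffAt ℝ ∞ w σ) ∧
      ∀ᶠ σ in nhds 0, G (σ, w σ) = 0 := by
  have hGd : ∀ p, DifferentiableAt ℝ G p := fun p => hG.differentiable (by simp) p
  have mkE : ∀ p, fderiv ℝ G p (0, 1) ≠ 0 → ∃ E2 : (ℝ × ℝ) ≃L[ℝ] (ℝ × ℝ),
      (E2 : (ℝ × ℝ) →L[ℝ] (ℝ × ℝ)) = (ContinuousLinearMap.fst ℝ ℝ ℝ).prod (fderiv ℝ G p) := by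
    intro p hd
    set N := fderiv ℝ G p with hN
    set cc := N (1, 0) with hcc
    set dd := N (0, 1) with hdd'
    set f2 : ℝ × ℝ →L[ℝ] ℝ × ℝ := (ContinuousLinearMap.fst ℝ ℝ ℝ).prod N with hf2
    set g2 : ℝ × ℝ →L[ℝ] ℝ × ℝ :=
      (ContinuousLinearMap.fst ℝ ℝ ℝ).prod
        (dd⁻¹ • ((ContinuousLinearMap.snd ℝ ℝ ℝ) - cc • (ContinuousLinearMap.fst ℝ ℝ ℝ))) with hg2
    have hleft : Function.LeftInverse g2 f2 := by
      intro p
      have := clm_decomp N p.1 p.2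
      simp only [hf2, hg2, ContinuousLinearMap.prod_apply, ContinuousLinearMap.coe_fst',
        ContinuousLinearMap.smul_apply, ContinuousLinearMap.coe_sub',
        ContinuousLinearMap.coe_snd', Pi.sub_apply, Pi.smul_apply, smul_eq_mul]
      rw [Prod.ext_iff]
      refine ⟨rfl, ?_⟩
      simp only [this]
      field_simp
      ring
    have hright : Function.RightInverse g2 f2 := by
      intro q
      have := clm_decomp N q.1 (dd⁻¹ * (q.2 - cc * q.1))
      simp only [hf2, hg2, ContinuousLinearMap.prod_apply, ContinuousLinearMap.coe_fst',
        ContinuousLinearMap.smul_apply, ContinuousLinearMap.coe_sub',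
        ContinuousLinearMap.coe_snd', Pi.sub_apply, Pi.smul_apply, smul_eq_mul]
      rw [Prod.ext_iff]
      refine ⟨rfl, ?_⟩
      simp only [this]
      field_simp
      ring
    exact ⟨ContinuousLinearEquiv.equivOfInverse f2 g2 hleft hright, rfl⟩
  have hdd : deriv (fun w => G (0, w)) w₀ = fderiv ℝ G (0, w₀) (0, 1) := (sliceY G (hGd _)).deriv
  rw [hdd] at hd
  set Ψ : ℝ × ℝ → ℝ × ℝ := fun q => (q.1, G q) with hΨ
  have hΨs : ContDiff ℝ ∞ Ψ := contDiff_fst.prodMk hG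
  have hΨd : ∀ p, HasFDerivAt Ψ ((ContinuousLinearMap.fst ℝ ℝ ℝ).prod (fderiv ℝ G p)) p :=
    fun p => hasFDerivAt_fst.prodMk (hGd p).hasFDerivAt
  obtain ⟨E0, hE0⟩ := mkE _ hd
  have h1n : (∞ : WithTop ℕ∞) ≠ 0 := by simp
  set PH := hΨs.contDiffAt.toOpenPartialHomeomorph Ψ (f' := E0) (by rw [hE0]; exact hΨd _) h1n
    with hPH
  have hsrc : ((0:ℝ), w₀) ∈ PH.source := ContDiffAt.mem_toOpenPartialHomeomorph_source _ _ _
  have htgt : Ψ ((0:ℝ), w₀) ∈ PH.target := ContDiffAt.image_mem_toOpenPartialHomeomorph_target _ _ _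
  have hΨ0 : Ψ (0, w₀) = ((0 : ℝ), (0 : ℝ)) := by simp [hΨ, hG0]
  rw [hΨ0] at htgt
  have hsym0 : PH.symm ((0:ℝ), (0:ℝ)) = (0, w₀) := by
    have := PH.left_inv hsrc
    rw [← this]
    exact congrArg PH.symm hΨ0.symm
  have hUo : IsOpen {p : ℝ × ℝ | fderiv ℝ G p (0, 1) ≠ 0} :=
    isOpen_ne_fun ((hG.continuous_fderiv (by simp)).clm_apply continuous_const) continuous_const
  have hev : ∀ᶠ q in nhds ((0:ℝ), (0:ℝ)), q ∈ PH.target ∧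
      PH.symm q ∈ {p : ℝ × ℝ | fderiv ℝ G p (0, 1) ≠ 0} := by
    exact Filter.inter_mem (PH.open_target.mem_nhds htgt)
      ((PH.continuousAt_symm htgt).preimage_mem_nhds (hUo.mem_nhds (by rw [hsym0]; exact hd)))
  have hsm : ∀ q, q ∈ PH.target ∧ PH.symm q ∈ {p : ℝ × ℝ | fderiv ℝ G p (0, 1) ≠ 0} →
      ContDiffAt ℝ ∞ PH.symm q := by
    intro q hq
    obtain ⟨E, hE⟩ := mkE _ hq.2
    exact PH.contDiffAt_symm (f₀' := E) hq.1 (by rw [hE]; exact hΨd _) hΨs.contDiffAt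
  have hcurve : Tendsto (fun σ : ℝ => (σ, (0 : ℝ))) (nhds 0) (nhds ((0 : ℝ), (0 : ℝ))) := by
    have : ContinuousAt (fun σ : ℝ => (σ, (0 : ℝ))) 0 := by fun_prop
    simpa using this.tendsto
  refine ⟨fun σ => (PH.symm (σ, 0)).2, ?_, ?_, ?_⟩
  · simpa using congrArg Prod.snd hsym0
  · filter_upwards [hcurve.eventually hev] with σ hσ
    exact contDiffAt_snd.comp σ ((hsm _ hσ).comp σ
      (contDiff_id.prodMk contDiff_const).contDiffAt)
  · filter_upwards [hcurve.eventually hev] with σ hσ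
    have hr : Ψ (PH.symm (σ, 0)) = (σ, 0) := PH.right_inv hσ.1
    have h1 : (PH.symm (σ, 0)).1 = σ := congrArg Prod.fst hr
    have h2 : G (PH.symm (σ, 0)) = 0 := congrArg Prod.snd hr
    have : PH.symm (σ, 0) = (σ, (PH.symm (σ, 0)).2) := by
      rw [Prod.ext_iff]; exact ⟨h1, rfl⟩
    rwa [this] at h2


/-- Pushed saddle node: for speeds `c_lin + σ²` above the linear spreading speed, i.e.
replacing `λ` by `−σ²ν` in the dispersion relation, the double root `ν₀ < 0` splits into
two smooth real families of roots `ν_±(σ) = ν₀ ± √(aν₀/b)σ + O(σ²)`. -/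
theorem stmt13 (D : ℝ → ℝ → ℝ)
    (hD : ContDiff ℝ (⊤ : ℕ∞) (fun p : ℝ × ℝ => D p.1 p.2))
    (ν₀ : ℝ) (hν₀ : ν₀ < 0) (a b : ℝ)
    (h0 : D 0 ν₀ = 0)
    (h1 : deriv (fun ν : ℝ => D 0 ν) ν₀ = 0)
    (ha : a = deriv (fun l : ℝ => D l ν₀) 0) (ha0 : a ≠ 0)
    (hb : b = (1/2) * iteratedDeriv 2 (fun ν : ℝ => D 0 ν) ν₀)
    (hab : a * b < 0) :
    ∃ ε : ℝ, 0 < ε ∧ ∃ νp νm : ℝ → ℝ,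
      ContDiffOn ℝ (⊤ : ℕ∞) νp (Set.Ioo (-ε) ε) ∧ ContDiffOn ℝ (⊤ : ℕ∞) νm (Set.Ioo (-ε) ε) ∧
      νp 0 = ν₀ ∧ νm 0 = ν₀ ∧
      deriv νp 0 = Real.sqrt (a * ν₀ / b) ∧ deriv νm 0 = -Real.sqrt (a * ν₀ / b) ∧
      ∀ σ ∈ Set.Ioo (-ε) ε,
        D (-(σ ^ 2) * νp σ) (νp σ) = 0 ∧ D (-(σ ^ 2) * νm σ) (νm σ) = 0 := by
  set Df : ℝ × ℝ → ℝ := fun p => D p.1 p.2 with hDfdef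
  have hDd : ∀ p : ℝ × ℝ, DifferentiableAt ℝ Df p := fun p => hD.differentiable (by simp) p
  set M : ℝ × ℝ →L[ℝ] ℝ := fderiv ℝ Df (0, ν₀) with hM
  -- partial derivatives at the base point
  have haM : M (1, 0) = a := by
    have hX : HasDerivAt (fun l : ℝ => D l ν₀) (M (1, 0)) 0 := sliceX Df (hDd _)
    rw [ha, hX.deriv]
  have hb0 : b ≠ 0 := by
    intro h; rw [h, mul_zero] at hab; exact lt_irrefl 0 hab
  -- Hadamard factorization in ν
  have hf0 : ContDiff ℝ ∞ (fun ν : ℝ => D 0 ν) := hD.comp (contDiff_const.prodMk contDiff_id)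
  obtain ⟨C, hC, hC0, hCf⟩ := hadamard1 _ hf0 ν₀
  rw [h1] at hC0
  obtain ⟨B, hB, hB0, hBf⟩ := hadamard1 C hC ν₀
  rw [hC0] at hBf
  have hbB : B ν₀ = b := by
    have hCd : Differentiable ℝ C := hC.differentiable (by simp)
    have hdC : Differentiable ℝ (deriv C) :=
      (contDiff_infty_iff_deriv.1 hC).2.differentiable (by simp)
    have hfe : (fun ν => D 0 ν) = fun ν => (ν - ν₀) * C ν := by
      funext ν
      have := hCf ν
      simp only [h0] at this
      linarith
    have hderiv : ∀ ν, HasDerivAt (fun ν => (ν - ν₀) * C ν)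
        (1 * C ν + (ν - ν₀) * deriv C ν) ν :=
      fun ν => ((hasDerivAt_id ν).sub_const ν₀).mul (hCd ν).hasDerivAt
    have hd1 : deriv (fun ν => D 0 ν) = fun ν => 1 * C ν + (ν - ν₀) * deriv C ν := by
      rw [hfe]; funext ν; exact (hderiv ν).deriv
    have hR : HasDerivAt (fun ν => 1 * C ν + (ν - ν₀) * deriv C ν)
        (1 * deriv C ν₀ + (1 * deriv C ν₀ + (ν₀ - ν₀) * deriv (deriv C) ν₀)) ν₀ :=
      ((hCd ν₀).hasDerivAt.const_mul 1).add
        (((hasDerivAt_id ν₀).sub_const ν₀).mul (hdC ν₀).hasDerivAt)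
    have hit : iteratedDeriv 2 (fun ν : ℝ => D 0 ν) ν₀ =
        deriv (deriv (fun ν : ℝ => D 0 ν)) ν₀ := by
      rw [iteratedDeriv_succ, iteratedDeriv_one]
    rw [hb, hit, hd1, hR.deriv, hB0]; ring
  -- Hadamard factorization in λ
  obtain ⟨A, hA, hA0, hAf⟩ := hadamardL Df hD
  have hA0' : A (0, ν₀) = a := by rw [hA0, ← hM, haM]
  -- positivity
  have hq : 0 < a * ν₀ / b := by
    have h2 : a * ν₀ / b = (a * b) * ν₀ / b^2 := by field_simp
    rw [h2]
    exact div_pos (mul_pos_of_neg_of_neg hab hν₀) (by positivity)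
  -- the key construction, for each root s of s² = aν₀/b
  have key : ∀ s : ℝ, s^2 = a * ν₀ / b → s ≠ 0 →
      ∃ ν : ℝ → ℝ, (∀ᶠ σ in nhds 0, ContDiffAt ℝ ∞ ν σ) ∧ ν 0 = ν₀ ∧ deriv ν 0 = s ∧
        ∀ᶠ σ in nhds 0, D (-(σ^2) * ν σ) (ν σ) = 0 := by
    intro s hs2 hsne
    set G : ℝ × ℝ → ℝ := fun q => q.2^2 * B (ν₀ + q.1 * q.2) -
      (ν₀ + q.1 * q.2) * A (-(q.1^2) * (ν₀ + q.1 * q.2), ν₀ + q.1 * q.2) with hGdef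
    have hGs : ContDiff ℝ ∞ G := by fun_prop
    have e2 : -((0:ℝ)^2) * ν₀ = 0 := by ring
    have hG0 : G ((0:ℝ), s) = 0 := by
      show s^2 * B (ν₀ + 0 * s) - (ν₀ + 0 * s) * A (-((0:ℝ)^2) * (ν₀ + 0 * s), ν₀ + 0 * s) = 0
      rw [show ν₀ + 0 * s = ν₀ by ring, e2, hbB, hA0', hs2, div_mul_cancel₀ _ hb0]
      ring
    have hGslice : (fun w => G (0, w)) = fun w => w^2 * b - ν₀ * a := by
      funext w
      show w^2 * B (ν₀ + 0 * w) - (ν₀ + 0 * w) * A (-((0:ℝ)^2) * (ν₀ + 0 * w), ν₀ + 0 * w) = _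
      rw [show ν₀ + 0 * w = ν₀ by ring, e2, hbB, hA0']
    have hGd : deriv (fun w => G (0, w)) s ≠ 0 := by
      rw [hGslice]
      have hdd : HasDerivAt (fun w : ℝ => w^2 * b - ν₀ * a) (2 * s * b) s := by
        have := ((hasDerivAt_pow 2 s).mul_const b).sub_const (ν₀ * a)
        exact this.congr_deriv (by norm_num)
      rw [hdd.deriv]
      exact mul_ne_zero (mul_ne_zero two_ne_zero hsne) hb0
    obtain ⟨w, hw0, hwsm, hwroot⟩ := ift2 G s hGs hG0 hGd
    have hwd : DifferentiableAt ℝ w 0 := (hwsm.self_of_nhds).differentiableAt (by simp)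
    refine ⟨fun σ => ν₀ + σ * w σ, ?_, by simp, ?_, ?_⟩
    · filter_upwards [hwsm] with σ hσ
      exact contDiffAt_const.add (contDiffAt_id.mul hσ)
    · have hdw : HasDerivAt (fun σ : ℝ => ν₀ + σ * w σ)
          (0 + (1 * w 0 + 0 * deriv w 0)) 0 :=
        (hasDerivAt_const 0 ν₀).add ((hasDerivAt_id 0).mul hwd.hasDerivAt)
      rw [hdw.deriv, hw0]; ring
    · filter_upwards [hwroot] with σ hGz
      have hGz' : (w σ)^2 * B (ν₀ + σ * w σ) - (ν₀ + σ * w σ) *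
          A (-(σ^2) * (ν₀ + σ * w σ), ν₀ + σ * w σ) = 0 := hGz
      have e1 := hAf (-(σ^2) * (ν₀ + σ * w σ)) (ν₀ + σ * w σ)
      have e2' : Df (0, ν₀ + σ * w σ) = (σ * w σ) * C (ν₀ + σ * w σ) := by
        have := hCf (ν₀ + σ * w σ)
        simp only [h0] at this
        show D 0 _ = _
        rw [this]; ring
      have e3 := hBf (ν₀ + σ * w σ)
      show Df (-(σ^2) * (ν₀ + σ * w σ), ν₀ + σ * w σ) = 0
      linear_combination e1 + e2' + (σ * w σ) * e3 + σ^2 * hGz'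
  -- apply to the two roots
  have hw2 : (Real.sqrt (a * ν₀ / b))^2 = a * ν₀ / b := Real.sq_sqrt hq.le
  have hwne : Real.sqrt (a * ν₀ / b) ≠ 0 := (Real.sqrt_pos.mpr hq).ne'
  obtain ⟨νp, hνpan, hνp0, hνpd, hνproot⟩ := key (Real.sqrt (a * ν₀ / b)) hw2 hwne
  obtain ⟨νm, hνman, hνm0, hνmd, hνmroot⟩ := key (-Real.sqrt (a * ν₀ / b))
    (by rw [neg_pow]; simpa using hw2) (neg_ne_zero.mpr hwne)
  -- choose ε
  have hsets : ∀ᶠ σ in nhds (0:ℝ), ContDiffAt ℝ ∞ νp σ ∧ ContDiffAt ℝ ∞ νm σ ∧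
      D (-(σ^2) * νp σ) (νp σ) = 0 ∧ D (-(σ^2) * νm σ) (νm σ) = 0 := by
    filter_upwards [hνpan, hνman, hνproot, hνmroot] with σ h1 h2 h3 h4
    exact ⟨h1, h2, h3, h4⟩
  rcases Metric.mem_nhds_iff.mp hsets with ⟨ε, hεpos, hball⟩
  have hIoo : Set.Ioo (-ε) ε ⊆ Metric.ball (0:ℝ) ε := by
    rw [Real.ball_eq_Ioo, zero_sub, zero_add]
  refine ⟨ε, hεpos, νp, νm, ?_, ?_, hνp0, hνm0, hνpd, hνmd, ?_⟩
  · exact fun σ hσ => (hball (hIoo hσ)).1.contDiffWithinAt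
  · exact fun σ hσ => (hball (hIoo hσ)).2.1.contDiffWithinAt
  · intro σ hσ
    exact ⟨(hball (hIoo hσ)).2.2.1, (hball (hIoo hσ)).2.2.2⟩
end

section
/- Let μ > 0, set c = μ/2 + 2/μ, and define q : ℝ → ℝ by q(x) = 1/(1 + e^{μx/2}). Then q satisfies the traveling wave equation q''(x) + c·q'(x) − μ·q(x)·q'(x) + q(x)(1 − q(x)) = 0 for every x ∈ ℝ; moreover q is strictly decreasing, q(x) → 1 as x → −∞, q(x) → 0 as x → +∞, and e^{μx/2}·q(x) → 1 as x → +∞, so the front decays with exponential rate μ/2. -/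
/-!
The profile is a rescaled logistic sigmoid, `q x = σ(-(μ/2) x)` with `σ x = (1 + e^{-x})⁻¹`.
Hence `q` solves the logistic equation `q' = -(μ/2) q (1 - q)`, so `q'' = (μ/2)² q (1 - q) (1 - 2q)`,
and the travelling-wave equation factors as `q (1 - q)` times an expression that vanishes exactly
when `c = μ/2 + 2/μ`. Monotonicity and the limits come from those of `σ`, and
`e^{μx/2} σ(-μx/2) = σ(μx/2)`.
-/

open Filter Real

theorem hasDerivAt_sigmoid_const_mul (a x : ℝ) :
    HasDerivAt (fun x => sigmoid (a * x)) (a * sigmoid (a * x) * (1 - sigmoid (a * x))) x :=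
  ((hasDerivAt_sigmoid (a * x)).comp x ((hasDerivAt_id' x).const_mul a)).congr_deriv (by ring)

theorem deriv_deriv_of_hasDerivAt_logistic {f : ℝ → ℝ} {a : ℝ}
    (hf : ∀ x, HasDerivAt f (a * f x * (1 - f x)) x) (x : ℝ) :
    deriv (deriv f) x = a ^ 2 * f x * (1 - f x) * (1 - 2 * f x) := by
  have hderiv : deriv f = fun x => a * f x * (1 - f x) := funext fun x => (hf x).deriv
  have hf' : HasDerivAt (fun x => a * f x * (1 - f x))
      (a * (a * f x * (1 - f x)) * (1 - f x) + a * f x * -(a * f x * (1 - f x))) x :=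
    ((hf x).const_mul a).mul ((hf x).const_sub 1)
  rw [hderiv, hf'.deriv]
  ring

theorem travelingWave_of_hasDerivAt_logistic {f : ℝ → ℝ} {μ : ℝ} (hμ : μ ≠ 0)
    (hf : ∀ x, HasDerivAt f (-(μ / 2) * f x * (1 - f x)) x) (x : ℝ) :
    deriv (deriv f) x + (μ / 2 + 2 / μ) * deriv f x - μ * f x * deriv f x
      + f x * (1 - f x) = 0 := by
  rw [deriv_deriv_of_hasDerivAt_logistic hf, (hf x).deriv]
  field_simp
  ring

/-- The explicit pushed front of the Fisher-KPP-Burgers equation: for `μ > 0`,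
`q(x) = (1 + e^{μx/2})⁻¹` solves `q'' + cq' − μqq' + q(1 − q) = 0` with
`c = μ/2 + 2/μ`, is strictly decreasing, connects `1` at `−∞` to `0` at `+∞`, and
decays with exponential rate `μ/2`. -/
theorem stmt17 (μ : ℝ) (hμ : 0 < μ) (c : ℝ) (hc : c = μ / 2 + 2 / μ)
    (q : ℝ → ℝ) (hq : ∀ x : ℝ, q x = 1 / (1 + Real.exp (μ * x / 2))) :
    (∀ x : ℝ, deriv (deriv q) x + c * deriv q x - μ * q x * deriv q x
      + q x * (1 - q x) = 0) ∧
    StrictAnti q ∧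
    Tendsto q atBot (nhds 1) ∧
    Tendsto q atTop (nhds 0) ∧
    Tendsto (fun x : ℝ => Real.exp (μ * x / 2) * q x) atTop (nhds 1) := by
  obtain rfl : q = fun x => sigmoid (-(μ / 2) * x) := by
    ext x
    rw [hq, sigmoid_def, one_div]
    ring_nf
  subst hc
  refine ⟨travelingWave_of_hasDerivAt_logistic hμ.ne' (hasDerivAt_sigmoid_const_mul _),
    sigmoid_strictMono.comp_strictAnti fun x y hxy => by nlinarith,
    tendsto_sigmoid_atTop.comp (tendsto_id.const_mul_atBot_of_neg (by linarith)),
    tendsto_sigmoid_atBot.comp (tendsto_id.const_mul_atTop_of_neg (by linarith)), ?_⟩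
  have hexp (x : ℝ) : exp (μ * x / 2) * sigmoid (-(μ / 2) * x) = sigmoid (μ / 2 * x) := by
    rw [mul_comm, show μ * x / 2 = -(-(μ / 2) * x) by ring, sigmoid_mul_rexp_neg, neg_mul, neg_neg]
  exact (tendsto_sigmoid_atTop.comp (tendsto_id.const_mul_atTop (by linarith))).congr
    fun x => (hexp x).symm
end
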